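/- arXiv:1601.06650 — 9 statements merged into one kernel-verified Lean document; each statement's English description precedes it below -/
import Mathlib

section
/- Let N ≥ 1 be an integer, ε ∈ [0,1], let K be an N×N real matrix with all entries in [0,1], and let D_N be the N×N matrix with entries (D_N)_{ij} = (1−ε)^{|i−j|/2}. Then ‖K ∘ D_N − K‖_F² ≤ (1/6)·N²(N²−1)·ε², and in particular ‖K ∘ D_N − K‖_F² ≤ N⁴ε². -/
/-!
Entrywise, `|K i j * D i j - K i j| ≤ 1 - D i j`, and with `m = |i - j|` a natural number,
`1 - (1 - ε) ^ (m / 2) ≤ 1 - (1 - ε) ^ m ≤ m ε` by Bernoulli's inequality.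
Summing `(i - j)² ε²` over all pairs of indices yields `N² (N² - 1) ε² / 6`.
-/

open Finset

lemma one_sub_rpow_half_le_mul {ε : ℝ} (hε0 : 0 ≤ ε) (hε1 : ε ≤ 1) (m : ℕ) :
    1 - (1 - ε) ^ ((m : ℝ) / 2) ≤ m * ε := by
  have hbase : 0 ≤ 1 - ε := by linarith
  have hhalf : (1 - ε) ^ (m : ℝ) ≤ (1 - ε) ^ ((m : ℝ) / 2) :=
    Real.rpow_le_rpow_of_exponent_ge' hbase (by linarith) (by positivity) (by linarith)
  have hbernoulli : 1 + m * (-ε) ≤ (1 + -ε) ^ m := one_add_mul_le_pow (by linarith) m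
  rw [Real.rpow_natCast] at hhalf
  rw [← sub_eq_add_neg] at hbernoulli
  linarith

lemma sq_one_sub_rpow_abs_sub_half_le {ε : ℝ} (hε0 : 0 ≤ ε) (hε1 : ε ≤ 1) (a b : ℕ) :
    (1 - (1 - ε) ^ (|(a : ℝ) - b| / 2)) ^ 2 ≤ ((a : ℝ) - b) ^ 2 * ε ^ 2 := by
  have habs : |(a : ℝ) - b| = (((a : ℤ) - b).natAbs : ℝ) := by
    rw [Nat.cast_natAbs]; push_cast; rfl
  have hle_one : (1 - ε) ^ (|(a : ℝ) - b| / 2) ≤ 1 :=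
    Real.rpow_le_one (by linarith) (by linarith) (by positivity)
  rw [← sq_abs ((a : ℝ) - b), ← mul_pow, habs]
  exact pow_le_pow_left₀ (by rw [← habs]; linarith) (one_sub_rpow_half_le_mul hε0 hε1 _) 2

lemma sum_range_cast (n : ℕ) : ∑ i ∈ range n, (i : ℝ) = n * (n - 1) / 2 := by
  induction n with
  | zero => simp
  | succ n ih => rw [sum_range_succ, ih]; push_cast; ring

lemma sum_range_cast_sq (n : ℕ) :
    ∑ i ∈ range n, (i : ℝ) ^ 2 = n * (n - 1) * (2 * n - 1) / 6 := by
  induction n with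
  | zero => simp
  | succ n ih => rw [sum_range_succ, ih]; push_cast; ring

lemma sum_range_sum_range_sub_sq (n : ℕ) :
    ∑ i ∈ range n, ∑ j ∈ range n, ((i : ℝ) - j) ^ 2 = n ^ 2 * (n ^ 2 - 1) / 6 := by
  simp only [sub_sq, sum_add_distrib, sum_sub_distrib, mul_assoc, ← mul_sum, ← sum_mul,
    sum_const, card_range, nsmul_eq_mul, sum_range_cast, sum_range_cast_sq]
  ring

lemma sum_fin_sum_fin_sub_sq (n : ℕ) :
    ∑ i : Fin n, ∑ j : Fin n, ((i : ℝ) - j) ^ 2 = n ^ 2 * (n ^ 2 - 1) / 6 := by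
  rw [Fin.sum_univ_eq_sum_range (fun i => ∑ j : Fin n, ((i : ℝ) - j) ^ 2),
    ← sum_range_sum_range_sub_sq]
  exact sum_congr rfl fun i _ => Fin.sum_univ_eq_sum_range (fun j => ((i : ℝ) - j) ^ 2) n

theorem frobenius_sq_hadamard_discount_sub_le_general
    (N : ℕ) (ε : ℝ) (hε0 : 0 ≤ ε) (hε1 : ε ≤ 1)
    (K : Matrix (Fin N) (Fin N) ℝ)
    (hK : ∀ i j, K i j ∈ Set.Icc (0 : ℝ) 1)
    (D : Matrix (Fin N) (Fin N) ℝ)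
    (hD : ∀ i j, D i j = (1 - ε) ^ ((|(i : ℝ) - (j : ℝ)|) / 2)) :
    (∑ i, ∑ j, (K i j * D i j - K i j) ^ 2) ≤ (1 / 6) * N ^ 2 * (N ^ 2 - 1) * ε ^ 2
      ∧ (∑ i, ∑ j, (K i j * D i j - K i j) ^ 2) ≤ N ^ 4 * ε ^ 2 := by
  have hentry : ∀ i j, (K i j * D i j - K i j) ^ 2 ≤ ((i : ℝ) - j) ^ 2 * ε ^ 2 := by
    intro i j
    obtain ⟨hK0, hK1⟩ := hK i j
    calc (K i j * D i j - K i j) ^ 2 = K i j ^ 2 * (1 - D i j) ^ 2 := by ring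
      _ ≤ 1 * (1 - D i j) ^ 2 := by gcongr; nlinarith
      _ ≤ ((i : ℝ) - j) ^ 2 * ε ^ 2 := by
        rw [one_mul, hD]; exact sq_one_sub_rpow_abs_sub_half_le hε0 hε1 i j
  have hsum : ∑ i, ∑ j, (K i j * D i j - K i j) ^ 2 ≤ N ^ 2 * (N ^ 2 - 1) / 6 * ε ^ 2 :=
    calc ∑ i, ∑ j, (K i j * D i j - K i j) ^ 2
        ≤ ∑ i : Fin N, ∑ j : Fin N, ((i : ℝ) - j) ^ 2 * ε ^ 2 :=
          sum_le_sum fun i _ => sum_le_sum fun j _ => hentry i j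
      _ = N ^ 2 * (N ^ 2 - 1) / 6 * ε ^ 2 := by
          simp only [← sum_mul, sum_fin_sum_fin_sub_sq]
  constructor
  · linarith
  · nlinarith [sq_nonneg ((N : ℝ) ^ 2 * ε), sq_nonneg ε]

/-- Frobenius-norm-squared bound on the deviation of `K ∘ D_N` from `K`, where
`D_N` has entries `(1-ε)^(|i-j|/2)` and the entries of `K` lie in `[0,1]`. -/
theorem frobenius_sq_hadamard_discount_sub_le
    (N : ℕ) (hN : 1 ≤ N) (ε : ℝ) (hε0 : 0 ≤ ε) (hε1 : ε ≤ 1)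
    (K : Matrix (Fin N) (Fin N) ℝ)
    (hK : ∀ i j, K i j ∈ Set.Icc (0 : ℝ) 1)
    (D : Matrix (Fin N) (Fin N) ℝ)
    (hD : ∀ i j, D i j = (1 - ε) ^ ((|(i : ℝ) - (j : ℝ)|) / 2)) :
    (∑ i, ∑ j, (K i j * D i j - K i j) ^ 2) ≤ (1 / 6) * N ^ 2 * (N ^ 2 - 1) * ε ^ 2
      ∧ (∑ i, ∑ j, (K i j * D i j - K i j) ^ 2) ≤ N ^ 4 * ε ^ 2 :=
  frobenius_sq_hadamard_discount_sub_le_general N ε hε0 hε1 K hK D hD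
end

section
/- Let A and B be N×N real symmetric positive semidefinite matrices. Then log det(I_N + B) ≤ log det(I_N + A) + N·log(1 + ‖B − A‖_F), and consequently log det(I_N + B) ≤ log det(I_N + A) + N·‖B − A‖_F. -/
/-! For symmetric `B - A`, Cauchy–Schwarz on the quadratic form gives
`B - A ≤ ‖B - A‖_F • 1` in the Loewner order, so `1 + B ≤ (1 + ‖B - A‖_F) • (1 + A)` because `A`
is positive semidefinite. The determinant is monotone in the Loewner order on positive
semidefinite matrices, which gives `det (1 + B) ≤ (1 + ‖B - A‖_F) ^ N * det (1 + A)`; take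
logarithms and use `log (1 + t) ≤ t`. -/

open scoped ComplexOrder
open Matrix Unitary

namespace Matrix

section RCLike

variable {n 𝕜 : Type*} [Fintype n] [RCLike 𝕜]

theorem PosSemidef.one_le_det_one_add [DecidableEq n] {T : Matrix n n 𝕜} (hT : T.PosSemidef) :
    1 ≤ (1 + T).det := by
  set U := hT.1.eigenvectorUnitary
  have hdet : (1 + T).det = ((∏ i, (1 + hT.1.eigenvalues i) : ℝ) : 𝕜) := by
    conv_lhs => rw [hT.1.spectral_theorem, ← map_one (conjStarAlgAut 𝕜 _ U), ← map_add,
      conjStarAlgAut_apply, det_mul_comm, ← mul_assoc, coe_star_mul_self, one_mul,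
      ← diagonal_one, diagonal_add, det_diagonal]
    simp
  rw [hdet, ← RCLike.ofReal_one, RCLike.ofReal_le_ofReal]
  exact Finset.one_le_prod fun i _ => le_add_of_nonneg_right (hT.eigenvalues_nonneg i)

open scoped MatrixOrder in
/-- Writing `P = Bᴴ B`, one has `Q = Bᴴ (1 + T) B` with `T = B⁻ᴴ (Q - P) B⁻¹` positive
semidefinite, so `det Q = det P · det (1 + T)`. -/
theorem PosSemidef.det_le_det [DecidableEq n] {P Q : Matrix n n 𝕜} (hP : P.PosSemidef)
    (hPQ : (Q - P).PosSemidef) : P.det ≤ Q.det := by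
  rcases eq_or_ne P.det 0 with hP0 | hP0
  · exact hP0 ▸ (by simpa using hP.add hPQ : Q.PosSemidef).det_nonneg
  obtain ⟨B, rfl⟩ := CStarAlgebra.nonneg_iff_eq_star_mul_self.mp hP.nonneg
  have hB : IsUnit B.det := by
    rw [det_mul] at hP0
    exact isUnit_iff_ne_zero.mpr (right_ne_zero_of_mul hP0)
  set T := (B⁻¹)ᴴ * (Q - star B * B) * B⁻¹
  have hQ : Q = star B * (1 + T) * B := by
    have hBinv : star B * (B⁻¹)ᴴ = 1 := by
      rw [star_eq_conjTranspose, ← conjTranspose_mul, nonsing_inv_mul _ hB, conjTranspose_one]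
    simp only [T, mul_add, add_mul, mul_one, ← mul_assoc, hBinv, one_mul]
    rw [mul_assoc, nonsing_inv_mul _ hB, mul_one, add_sub_cancel]
  calc (star B * B).det = (star B * B).det * 1 := (mul_one _).symm
    _ ≤ (star B * B).det * (1 + T).det :=
      mul_le_mul_of_nonneg_left (hPQ.conjTranspose_mul_mul_same _).one_le_det_one_add
        hP.det_nonneg
    _ = Q.det := by rw [hQ, det_mul, det_mul, det_mul]; ring

end RCLike

variable {n : Type*} [Fintype n]

theorem dotProduct_mulVec_le_sqrt_sum_sq_mul (M : Matrix n n ℝ) (x : n → ℝ) :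
    x ⬝ᵥ M *ᵥ x ≤ √(∑ i, ∑ j, M i j ^ 2) * (x ⬝ᵥ x) := by
  have hquad : x ⬝ᵥ M *ᵥ x = ∑ p : n × n, M p.1 p.2 * (x p.1 * x p.2) := by
    simp only [Fintype.sum_prod_type, dotProduct, mulVec, Finset.mul_sum]
    exact Finset.sum_congr rfl fun i _ => Finset.sum_congr rfl fun j _ => by ring
  have hsq : ∑ p : n × n, (x p.1 * x p.2) ^ 2 = (x ⬝ᵥ x) ^ 2 := by
    simp only [Fintype.sum_prod_type, dotProduct, sq, Finset.sum_mul_sum]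
    ring_nf
  have hxx : 0 ≤ x ⬝ᵥ x := Finset.sum_nonneg fun i _ => mul_self_nonneg (x i)
  rw [hquad, ← Real.sqrt_sq hxx, ← hsq, ← Fintype.sum_prod_type']
  exact Real.sum_mul_le_sqrt_mul_sqrt _ _ _

theorem IsSymm.posSemidef_sqrt_sum_sq_smul_one_sub [DecidableEq n] {M : Matrix n n ℝ}
    (hM : M.IsSymm) : (√(∑ i, ∑ j, M i j ^ 2) • 1 - M).PosSemidef := by
  refine .of_dotProduct_mulVec_nonneg ?_ fun x => ?_
  · simpa [isHermitian_iff_isSymm] using (isSymm_one.smul _).sub hM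
  · simpa [sub_mulVec, smul_mulVec, mul_comm] using dotProduct_mulVec_le_sqrt_sum_sq_mul M x

theorem det_one_add_le_pow_mul_det_one_add [DecidableEq n] {A B : Matrix n n ℝ}
    (hA : A.PosSemidef) (hB : B.PosSemidef) :
    (1 + B).det ≤ (1 + √(∑ i, ∑ j, (B i j - A i j) ^ 2)) ^ Fintype.card n * (1 + A).det := by
  set r := √(∑ i, ∑ j, (B i j - A i j) ^ 2)
  have hBA : (B - A).IsSymm := by
    simpa [isHermitian_iff_isSymm] using hB.isHermitian.sub hA.isHermitian
  have hslack : ((1 + r) • (1 + A) - (1 + B)).PosSemidef := by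
    have hdiff : (r • 1 - (B - A)).PosSemidef := by
      simpa only [sub_apply] using hBA.posSemidef_sqrt_sum_sq_smul_one_sub
    convert hdiff.add (hA.smul (Real.sqrt_nonneg _ : 0 ≤ r)) using 1
    module
  calc (1 + B).det ≤ ((1 + r) • (1 + A)).det := (PosSemidef.one.add hB).det_le_det hslack
    _ = _ := det_smul _ _

end Matrix

/-- Mirsky-type log-det perturbation bound: for real symmetric PSD matrices `A, B`,
`log det(I + B) ≤ log det(I + A) + N·log(1 + ‖B - A‖_F) ≤ log det(I + A) + N·‖B - A‖_F`. -/
theorem log_det_one_add_le_of_frobenius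
    (N : ℕ) (A B : Matrix (Fin N) (Fin N) ℝ)
    (hA_symm : A.IsSymm) (hA_psd : ∀ x : Fin N → ℝ, 0 ≤ x ⬝ᵥ A.mulVec x)
    (hB_symm : B.IsSymm) (hB_psd : ∀ x : Fin N → ℝ, 0 ≤ x ⬝ᵥ B.mulVec x) :
    Real.log (1 + B).det ≤
        Real.log (1 + A).det
          + N * Real.log (1 + Real.sqrt (∑ i, ∑ j, (B i j - A i j) ^ 2))
      ∧ Real.log (1 + B).det ≤
        Real.log (1 + A).det + N * Real.sqrt (∑ i, ∑ j, (B i j - A i j) ^ 2) := by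
  have hA : A.PosSemidef :=
    .of_dotProduct_mulVec_nonneg (isHermitian_iff_isSymm.mpr hA_symm) (by simpa using hA_psd)
  have hB : B.PosSemidef :=
    .of_dotProduct_mulVec_nonneg (isHermitian_iff_isSymm.mpr hB_symm) (by simpa using hB_psd)
  set r := Real.sqrt (∑ i, ∑ j, (B i j - A i j) ^ 2)
  have hr : 0 ≤ r := Real.sqrt_nonneg _
  have hdet := det_one_add_le_pow_mul_det_one_add hA hB
  rw [Fintype.card_fin] at hdet
  have hlog : Real.log (1 + B).det ≤ Real.log (1 + A).det + N * Real.log (1 + r) :=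
    calc Real.log (1 + B).det
        ≤ Real.log ((1 + r) ^ N * (1 + A).det) :=
          Real.log_le_log (one_pos.trans_le hB.one_le_det_one_add) hdet
      _ = Real.log (1 + A).det + N * Real.log (1 + r) := by
          rw [Real.log_mul (by positivity) (one_pos.trans_le hA.one_le_det_one_add).ne',
            Real.log_pow, add_comm]
  refine ⟨hlog, hlog.trans ?_⟩
  gcongr
  linarith [Real.log_le_sub_one_of_pos (by positivity : (0 : ℝ) < 1 + r)]
end

section
/- Let K be a T×T real symmetric positive semidefinite matrix and σ > 0. Define s_1 = K_{11}, and for 2 ≤ t ≤ T define s_t = K_{tt} − kᵀ(K^{(t−1)} + σ²I_{t−1})⁻¹k, where K^{(t−1)} is the leading (t−1)×(t−1) principal submatrix of K and k = (K_{1t}, …, K_{(t−1)t})ᵀ. Then log det(I_T + σ⁻²K) = ∑_{t=1}^T log(1 + σ⁻² s_t). -/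
/-!
Put `M = 1 + σ⁻² K`, a positive definite matrix. Writing its leading `t × t` block as
`σ⁻² (K_t + σ² I)` shows that the Schur complement of that block inside the leading
`(t + 1) × (t + 1)` block is exactly `1 + σ⁻² s_t`. The Schur determinant formula then makes the
leading principal minors telescope, `det M_{t+1} = det M_t · (1 + σ⁻² s_t)`, so
`det M = ∏ₜ (1 + σ⁻² s_t)`; all minors are positive, so no factor vanishes and the logarithm
of the product splits into the sum.
-/

open scoped Matrix

namespace Matrix

section CommRing

variable {R : Type*} [CommRing R]

theorem det_eq_det_submatrix_castSucc_mul_schur {n : ℕ}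
    (M : Matrix (Fin (n + 1)) (Fin (n + 1)) R)
    (h : IsUnit (M.submatrix Fin.castSucc Fin.castSucc).det) :
    M.det = (M.submatrix Fin.castSucc Fin.castSucc).det *
      (M (Fin.last n) (Fin.last n) - (fun j => M (Fin.last n) j.castSucc) ⬝ᵥ
        ((M.submatrix Fin.castSucc Fin.castSucc)⁻¹ *ᵥ fun i => M i.castSucc (Fin.last n))) := by
  let _ := invertibleOfIsUnitDet _ h
  have hblocks : M.submatrix finSumFinEquiv finSumFinEquiv =
      fromBlocks (M.submatrix Fin.castSucc Fin.castSucc)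
        (of fun i (_ : Fin 1) => M i.castSucc (Fin.last n))
        (of fun (_ : Fin 1) j => M (Fin.last n) j.castSucc)
        (of fun _ _ => M (Fin.last n) (Fin.last n)) := by
    ext (i | i) (j | j) <;> simp [Fin.fin_one_eq_zero] <;> rfl
  rw [← det_submatrix_equiv_self finSumFinEquiv, hblocks, det_fromBlocks₁₁, det_fin_one,
    invOf_eq_nonsing_inv, dotProduct_mulVec]
  simp [mul_apply, vecMul, dotProduct]

variable {T : ℕ}

abbrev leadingSubmatrix (A : Matrix (Fin T) (Fin T) R) (n : ℕ) (h : n ≤ T) :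
    Matrix (Fin n) (Fin n) R :=
  A.submatrix (Fin.castLE h) (Fin.castLE h)

noncomputable def leadingSchurComplement (A : Matrix (Fin T) (Fin T) R) (t : Fin T) : R :=
  A t t - (fun j => A t (Fin.castLE t.isLt.le j)) ⬝ᵥ
    ((A.leadingSubmatrix t t.isLt.le)⁻¹ *ᵥ fun i => A (Fin.castLE t.isLt.le i) t)

theorem det_leadingSubmatrix_succ (A : Matrix (Fin T) (Fin T) R) (t : Fin T)
    (h : IsUnit (A.leadingSubmatrix t t.isLt.le).det) :
    (A.leadingSubmatrix (t + 1) t.isLt).det =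
      (A.leadingSubmatrix t t.isLt.le).det * A.leadingSchurComplement t :=
  det_eq_det_submatrix_castSucc_mul_schur _ h

theorem det_eq_prod_of_det_leadingSubmatrix_succ (A : Matrix (Fin T) (Fin T) R) (d : Fin T → R)
    (h : ∀ t : Fin T, (A.leadingSubmatrix (t + 1) t.isLt).det =
      (A.leadingSubmatrix t t.isLt.le).det * d t) :
    A.det = ∏ t, d t := by
  suffices ∀ n (hn : n ≤ T), (A.leadingSubmatrix n hn).det = ∏ i : Fin n, d (Fin.castLE hn i) by
    simpa [leadingSubmatrix] using this T le_rfl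
  intro n hn
  induction n with
  | zero => simp
  | succ n ih => rw [h ⟨n, hn⟩, ih, Fin.prod_univ_castSucc]; rfl

end CommRing

section Field

variable {𝕜 : Type*} [Field 𝕜]

theorem inv_smul₀ {n : Type*} [Fintype n] [DecidableEq n] (c : 𝕜) (A : Matrix n n 𝕜) :
    (c • A)⁻¹ = c⁻¹ • A⁻¹ := by
  rcases eq_or_ne c 0 with rfl | hc
  · simp
  by_cases hA : IsUnit A.det
  · exact inv_smul' A (Units.mk0 c hc) hA
  · have hcA : ¬IsUnit (c • A).det := by simpa [det_smul, hc] using hA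
    rw [nonsing_inv_apply_not_isUnit _ hA, nonsing_inv_apply_not_isUnit _ hcA, smul_zero]

variable {T : ℕ}

theorem leadingSchurComplement_one_add_smul (K : Matrix (Fin T) (Fin T) 𝕜) (hK : K.IsSymm)
    (c : 𝕜) (t : Fin T) :
    (1 + c • K).leadingSchurComplement t =
      1 + c * (K t t - (fun i => K (Fin.castLE t.isLt.le i) t) ⬝ᵥ
        ((K.leadingSubmatrix t t.isLt.le + c⁻¹ • 1)⁻¹ *ᵥ
          fun i => K (Fin.castLE t.isLt.le i) t)) := by
  set k : Fin t → 𝕜 := fun i => K (Fin.castLE t.isLt.le i) t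
  have hne (i : Fin t) : Fin.castLE t.isLt.le i ≠ t := Fin.ne_of_lt i.isLt
  have hcol : (fun i => (1 + c • K) (Fin.castLE t.isLt.le i) t) = c • k := by
    ext i
    simp [k, one_apply_ne (hne i)]
  have hrow : (fun j => (1 + c • K) t (Fin.castLE t.isLt.le j)) = c • k := by
    ext j
    simp [k, one_apply_ne (hne j).symm, hK.apply]
  rw [leadingSchurComplement, hcol, hrow]
  rcases eq_or_ne c 0 with rfl | hc
  · simp
  have hlead : (1 + c • K).leadingSubmatrix t t.isLt.le =
      c • (K.leadingSubmatrix t t.isLt.le + c⁻¹ • 1) := by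
    rw [smul_add, smul_smul, mul_inv_cancel₀ hc, one_smul, add_comm]
    ext i j
    simp [one_apply, (Fin.castLE_injective _).eq_iff]
  rw [hlead, inv_smul₀, smul_mulVec, smul_dotProduct, dotProduct_smul]
  simp only [add_apply, one_apply_eq, smul_apply, smul_eq_mul, mulVec_smul, dotProduct_smul]
  rw [mul_inv_cancel_left₀ hc]
  ring

end Field

end Matrix

theorem log_det_eq_sum_log_posterior_var_general
    (T : ℕ) (σ : ℝ)
    (K : Matrix (Fin T) (Fin T) ℝ)
    (h_symm : K.IsSymm) (h_psd : ∀ x : Fin T → ℝ, 0 ≤ x ⬝ᵥ K.mulVec x)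
    (s : Fin T → ℝ)
    (hs : ∀ t : Fin T,
      s t = K t t -
        (fun i : Fin t.val => K (Fin.castLE t.isLt.le i) t) ⬝ᵥ
          ((K.submatrix (Fin.castLE t.isLt.le) (Fin.castLE t.isLt.le)
              + σ ^ 2 • (1 : Matrix (Fin t.val) (Fin t.val) ℝ))⁻¹.mulVec
            (fun i : Fin t.val => K (Fin.castLE t.isLt.le i) t))) :
    Real.log (1 + (σ ^ 2)⁻¹ • K).det = ∑ t : Fin T, Real.log (1 + (σ ^ 2)⁻¹ * s t) := by
  have hK : K.PosSemidef :=
    Matrix.posSemidef_iff_dotProduct_mulVec.mpr ⟨h_symm, fun x => by simpa using h_psd x⟩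
  have hM : (1 + (σ ^ 2)⁻¹ • K).PosDef :=
    Matrix.PosDef.one.add_posSemidef (hK.smul (by positivity))
  have hlead (n : ℕ) (hn : n ≤ T) : ((1 + (σ ^ 2)⁻¹ • K).leadingSubmatrix n hn).PosDef :=
    hM.submatrix (Fin.castLE_injective hn)
  have hstep (t : Fin T) : ((1 + (σ ^ 2)⁻¹ • K).leadingSubmatrix (t + 1) t.isLt).det =
      ((1 + (σ ^ 2)⁻¹ • K).leadingSubmatrix t t.isLt.le).det * (1 + (σ ^ 2)⁻¹ * s t) := by
    rw [Matrix.det_leadingSubmatrix_succ _ t (hlead t _).det_pos.ne'.isUnit,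
      Matrix.leadingSchurComplement_one_add_smul K h_symm, inv_inv, hs t]
  have hfactor_ne (t : Fin T) : 1 + (σ ^ 2)⁻¹ * s t ≠ 0 :=
    right_ne_zero_of_mul (hstep t ▸ (hlead (t + 1) _).det_pos.ne')
  rw [Matrix.det_eq_prod_of_det_leadingSubmatrix_succ _ _ hstep,
    Real.log_prod fun t _ => hfactor_ne t]

/-- Telescoping identity expressing `log det(I + σ⁻²K)` as a sum of logs of
`1 + σ⁻²·(posterior variance)`, where `s t` is the Schur-complement-type quantity
`K_{tt} - kᵀ(K^{(t-1)} + σ²I)⁻¹k` built from the leading principal submatrix. -/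
theorem log_det_eq_sum_log_posterior_var
    (T : ℕ) (σ : ℝ) (hσ : 0 < σ)
    (K : Matrix (Fin T) (Fin T) ℝ)
    (h_symm : K.IsSymm) (h_psd : ∀ x : Fin T → ℝ, 0 ≤ x ⬝ᵥ K.mulVec x)
    (s : Fin T → ℝ)
    (hs : ∀ t : Fin T,
      s t = K t t -
        (fun i : Fin t.val => K (Fin.castLE t.isLt.le i) t) ⬝ᵥ
          ((K.submatrix (Fin.castLE t.isLt.le) (Fin.castLE t.isLt.le)
              + σ ^ 2 • (1 : Matrix (Fin t.val) (Fin t.val) ℝ))⁻¹.mulVec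
            (fun i : Fin t.val => K (Fin.castLE t.isLt.le i) t))) :
    Real.log (1 + (σ ^ 2)⁻¹ • K).det = ∑ t : Fin T, Real.log (1 + (σ ^ 2)⁻¹ * s t) :=
  log_det_eq_sum_log_posterior_var_general T σ K h_symm h_psd s hs
end

section
/- Let N ≥ 1 be an integer, ε ∈ [0,1], and σ > 0. Let K and K̃ be N×N real symmetric positive semidefinite matrices with ‖K̃ − K‖₂ ≤ N²ε, and let k, k̃ ∈ ℝ^N satisfy ‖k‖₂² ≤ N, ‖k̃‖₂² ≤ N, and ‖k̃ − k‖₂² ≤ N³ε². Then |k̃ᵀ(K̃ + σ²I_N)⁻¹k̃ − kᵀ(K + σ²I_N)⁻¹k| ≤ (3σ⁻² + σ⁻⁴)·N³ε. -/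
/-!
Both quadratic forms are `⟪x, C x⟫` for `C = (K + σ²I)⁻¹` acting on `ℓ²`. Since `xᵀKx ≥ 0`,
the operator `K + σ²I` is `σ²`-coercive, hence invertible with `‖C‖ ≤ σ⁻²`, and
`C̃ - C = C̃ (K - K̃) C` has norm at most `σ⁻⁴ ‖K̃ - K‖`. Splitting
`⟪k̃, C̃ k̃⟫ - ⟪k, C k⟫ = ⟪k̃, (C̃ - C) k̃⟫ + ⟪k̃ - k, C k̃⟫ + ⟪k, C (k̃ - k)⟫`
and applying Cauchy–Schwarz to each term gives `σ⁻⁴ N³ ε + 2 σ⁻² N² ε`.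
-/

open scoped Matrix BigOperators

/-- The spectral norm (ℓ²→ℓ² operator norm) of a real square matrix. -/
noncomputable def spectralNorm' {N : ℕ} (M : Matrix (Fin N) (Fin N) ℝ) : ℝ :=
  ‖(Matrix.toEuclideanCLM (𝕜 := ℝ) M :
      EuclideanSpace ℝ (Fin N) →L[ℝ] EuclideanSpace ℝ (Fin N))‖

open scoped RealInnerProductSpace

section OperatorBounds

variable {E : Type*} [NormedAddCommGroup E] [InnerProductSpace ℝ E]

theorem ContinuousLinearMap.mul_norm_le_norm_apply_of_le_inner {T : E →L[ℝ] E} {c : ℝ}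
    (hT : ∀ x, c * ‖x‖ ^ 2 ≤ ⟪x, T x⟫) (x : E) : c * ‖x‖ ≤ ‖T x‖ := by
  rcases (norm_nonneg x).eq_or_lt with hx | hx
  · rw [← hx, mul_zero]
    exact norm_nonneg _
  · refine le_of_mul_le_mul_right ?_ hx
    calc c * ‖x‖ * ‖x‖ = c * ‖x‖ ^ 2 := by ring
      _ ≤ ⟪x, T x⟫ := hT x
      _ ≤ ‖x‖ * ‖T x‖ := real_inner_le_norm _ _
      _ = ‖T x‖ * ‖x‖ := mul_comm _ _

theorem ContinuousLinearMap.norm_le_inv_of_le_inner_of_mul_eq_one {T S : E →L[ℝ] E} {c : ℝ}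
    (hc : 0 < c) (hT : ∀ x, c * ‖x‖ ^ 2 ≤ ⟪x, T x⟫) (hTS : T * S = 1) : ‖S‖ ≤ c⁻¹ := by
  refine S.opNorm_le_bound (inv_nonneg.mpr hc.le) fun y => ?_
  have hTSy : T (S y) = y := by rw [← mul_apply_eq_comp, hTS, one_apply_eq_self]
  rw [inv_mul_eq_div, le_div_iff₀' hc]
  simpa only [hTSy] using T.mul_norm_le_norm_apply_of_le_inner hT (S y)

theorem abs_inner_map_sub_inner_map_le (S S' : E →L[ℝ] E) (u v : E) :
    |⟪u, S' u⟫ - ⟪v, S v⟫| ≤ ‖S' - S‖ * ‖u‖ ^ 2 + ‖S‖ * ‖u - v‖ * (‖u‖ + ‖v‖) := by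
  have hsplit : ⟪u, S' u⟫ - ⟪v, S v⟫ = ⟪u, (S' - S) u⟫ + ⟪u - v, S u⟫ + ⟪v, S (u - v)⟫ := by
    simp only [sub_apply, map_sub, inner_sub_left, inner_sub_right]
    ring
  have hinner (S : E →L[ℝ] E) (x y : E) : |⟪x, S y⟫| ≤ ‖S‖ * ‖x‖ * ‖y‖ :=
    calc |⟪x, S y⟫| ≤ ‖x‖ * ‖S y‖ := abs_real_inner_le_norm _ _
      _ ≤ ‖x‖ * (‖S‖ * ‖y‖) := by gcongr; exact S.le_opNorm y
      _ = ‖S‖ * ‖x‖ * ‖y‖ := by ring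
  rw [hsplit]
  calc _ ≤ |⟪u, (S' - S) u⟫| + |⟪u - v, S u⟫| + |⟪v, S (u - v)⟫| := abs_add_three _ _ _
    _ ≤ ‖S' - S‖ * ‖u‖ * ‖u‖ + ‖S‖ * ‖u - v‖ * ‖u‖ + ‖S‖ * ‖v‖ * ‖u - v‖ := by
        gcongr <;> apply hinner
    _ = _ := by ring

end OperatorBounds

namespace Matrix

variable {n : Type*} [Fintype n] [DecidableEq n]

theorem le_inner_toEuclideanCLM_add_smul_one {M : Matrix n n ℝ}
    (hM : ∀ x, 0 ≤ x ⬝ᵥ M *ᵥ x) (s : ℝ) (x : EuclideanSpace ℝ n) :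
    s * ‖x‖ ^ 2 ≤ ⟪x, toEuclideanCLM (𝕜 := ℝ) (M + s • 1) x⟫ := by
  rw [map_add, map_smul, map_one, _root_.add_apply, _root_.smul_apply, one_apply_eq_self,
    inner_add_right, real_inner_smul_right, real_inner_self_eq_norm_sq, inner_toEuclideanCLM]
  linarith [hM x.ofLp]

theorem isUnit_of_le_inner_toEuclideanCLM {A : Matrix n n ℝ} {c : ℝ} (hc : 0 < c)
    (hA : ∀ x, c * ‖x‖ ^ 2 ≤ ⟪x, toEuclideanCLM (𝕜 := ℝ) A x⟫) : IsUnit A := by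
  rw [← mulVec_injective_iff_isUnit]
  intro x y hxy
  have hzero : toEuclideanCLM (𝕜 := ℝ) A (WithLp.toLp 2 (x - y)) = 0 := by simp [hxy]
  have hbound := (toEuclideanCLM (𝕜 := ℝ) A).mul_norm_le_norm_apply_of_le_inner hA
    (WithLp.toLp 2 (x - y))
  rw [hzero, norm_zero] at hbound
  have hxy0 : WithLp.toLp 2 (x - y) = 0 :=
    norm_le_zero_iff.mp (nonpos_of_mul_nonpos_right hbound hc)
  simpa [sub_eq_zero] using hxy0

theorem norm_toEuclideanCLM_inv_le {A : Matrix n n ℝ} {c : ℝ} (hc : 0 < c)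
    (hA : ∀ x, c * ‖x‖ ^ 2 ≤ ⟪x, toEuclideanCLM (𝕜 := ℝ) A x⟫) :
    ‖toEuclideanCLM (𝕜 := ℝ) A⁻¹‖ ≤ c⁻¹ := by
  refine ContinuousLinearMap.norm_le_inv_of_le_inner_of_mul_eq_one hc hA ?_
  rw [← map_mul, mul_nonsing_inv _ ((isUnit_iff_isUnit_det A).mp
    (isUnit_of_le_inner_toEuclideanCLM hc hA)), map_one]

theorem norm_toEuclideanCLM_inv_add_smul_one_le {M : Matrix n n ℝ}
    (hM : ∀ x, 0 ≤ x ⬝ᵥ M *ᵥ x) {s : ℝ} (hs : 0 < s) :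
    ‖toEuclideanCLM (𝕜 := ℝ) (n := n) (M + s • 1)⁻¹‖ ≤ s⁻¹ :=
  norm_toEuclideanCLM_inv_le hs (le_inner_toEuclideanCLM_add_smul_one hM s)

theorem norm_toEuclideanCLM_inv_add_smul_one_sub_le {M M' : Matrix n n ℝ}
    (hM : ∀ x, 0 ≤ x ⬝ᵥ M *ᵥ x) (hM' : ∀ x, 0 ≤ x ⬝ᵥ M' *ᵥ x) {s : ℝ} (hs : 0 < s) :
    ‖toEuclideanCLM (𝕜 := ℝ) (n := n) (M' + s • 1)⁻¹ -
        toEuclideanCLM (𝕜 := ℝ) (n := n) (M + s • 1)⁻¹‖ ≤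
      s⁻¹ * ‖toEuclideanCLM (𝕜 := ℝ) (n := n) (M' - M)‖ * s⁻¹ := by
  have hunit {M : Matrix n n ℝ} (hM : ∀ x, 0 ≤ x ⬝ᵥ M *ᵥ x) : IsUnit (M + s • 1) :=
    isUnit_of_le_inner_toEuclideanCLM hs (le_inner_toEuclideanCLM_add_smul_one hM s)
  rw [← map_sub, inv_sub_inv (iff_of_true (hunit hM') (hunit hM)), add_sub_add_right_eq_sub,
    ← neg_sub M' M, _root_.mul_neg, _root_.neg_mul, map_neg, norm_neg, map_mul, map_mul]
  calc _ ≤ _ := norm_mul₃_le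
    _ ≤ _ := by
      gcongr
      · exact norm_toEuclideanCLM_inv_add_smul_one_le hM' hs
      · exact norm_toEuclideanCLM_inv_add_smul_one_le hM hs

end Matrix

theorem abs_posterior_var_mismatch_le_general
    (N : ℕ) (hN : 1 ≤ N) (ε : ℝ) (hε0 : 0 ≤ ε) (σ : ℝ) (hσ : 0 < σ)
    (K Kt : Matrix (Fin N) (Fin N) ℝ)
    (hK_psd : ∀ x : Fin N → ℝ, 0 ≤ x ⬝ᵥ K.mulVec x)
    (hKt_psd : ∀ x : Fin N → ℝ, 0 ≤ x ⬝ᵥ Kt.mulVec x)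
    (hKdiff : spectralNorm' (Kt - K) ≤ N ^ 2 * ε)
    (k kt : Fin N → ℝ)
    (hk : ∑ i, (k i) ^ 2 ≤ N) (hkt : ∑ i, (kt i) ^ 2 ≤ N)
    (hkdiff : ∑ i, (kt i - k i) ^ 2 ≤ N ^ 3 * ε ^ 2) :
    |kt ⬝ᵥ (Kt + σ ^ 2 • (1 : Matrix (Fin N) (Fin N) ℝ))⁻¹.mulVec kt
      - k ⬝ᵥ (K + σ ^ 2 • (1 : Matrix (Fin N) (Fin N) ℝ))⁻¹.mulVec k| ≤
      (3 * (σ ^ 2)⁻¹ + (σ ^ 4)⁻¹) * N ^ 3 * ε := by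
  set u := WithLp.toLp 2 kt
  set v := WithLp.toLp 2 k
  have hu : ‖u‖ ^ 2 ≤ N := by rwa [EuclideanSpace.real_norm_sq_eq]
  have hv : ‖v‖ ^ 2 ≤ N := by rwa [EuclideanSpace.real_norm_sq_eq]
  have huv : ‖u - v‖ ^ 2 ≤ N ^ 3 * ε ^ 2 := by
    rwa [← WithLp.toLp_sub, EuclideanSpace.real_norm_sq_eq]
  have hcross {w : EuclideanSpace ℝ (Fin N)} (hw : ‖w‖ ^ 2 ≤ N) : ‖u - v‖ * ‖w‖ ≤ N ^ 2 * ε := by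
    refine (pow_le_pow_iff_left₀ (by positivity) (by positivity) two_ne_zero).mp ?_
    calc (‖u - v‖ * ‖w‖) ^ 2 = ‖u - v‖ ^ 2 * ‖w‖ ^ 2 := mul_pow _ _ _
      _ ≤ N ^ 3 * ε ^ 2 * N := by gcongr
      _ = (N ^ 2 * ε) ^ 2 := by ring
  set C := Matrix.toEuclideanCLM (𝕜 := ℝ) (K + σ ^ 2 • 1)⁻¹
  set C' := Matrix.toEuclideanCLM (𝕜 := ℝ) (Kt + σ ^ 2 • 1)⁻¹
  have hC : ‖C‖ ≤ (σ ^ 2)⁻¹ :=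
    Matrix.norm_toEuclideanCLM_inv_add_smul_one_le hK_psd (by positivity)
  have hCC' : ‖C' - C‖ ≤ (σ ^ 2)⁻¹ * (N ^ 2 * ε) * (σ ^ 2)⁻¹ :=
    (Matrix.norm_toEuclideanCLM_inv_add_smul_one_sub_le hK_psd hKt_psd (by positivity)).trans
      (by gcongr; exact hKdiff)
  have hfirst : ‖C' - C‖ * ‖u‖ ^ 2 ≤ (σ ^ 2)⁻¹ * (N ^ 2 * ε) * (σ ^ 2)⁻¹ * N := by gcongr
  have hsecond : ‖C‖ * ‖u - v‖ * (‖u‖ + ‖v‖) ≤ (σ ^ 2)⁻¹ * (2 * (N ^ 2 * ε)) := by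
    rw [mul_assoc, mul_add]
    gcongr
    linarith [hcross hu, hcross hv]
  have hN23 : (N : ℝ) ^ 2 ≤ N ^ 3 := by
    exact_mod_cast Nat.pow_le_pow_right hN (by norm_num)
  rw [← Matrix.inner_toEuclideanCLM, ← Matrix.inner_toEuclideanCLM]
  refine (abs_inner_map_sub_inner_map_le C C' u v).trans ?_
  rw [show σ ^ 4 = σ ^ 2 * σ ^ 2 by ring, mul_inv]
  have hσ2 : 0 ≤ (σ ^ 2)⁻¹ := by positivity
  have hpos : 0 ≤ (σ ^ 2)⁻¹ * ε * N ^ 3 := by positivity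
  linear_combination
    hfirst + hsecond + hpos + 2 * mul_le_mul_of_nonneg_left hN23 (mul_nonneg hσ2 hε0)

/-- Variance part of the mismatched-posterior lemma: the posterior-variance quadratic
forms built from `(K̃, k̃)` and `(K, k)` differ by at most `(3σ⁻² + σ⁻⁴)N³ε`. -/
theorem abs_posterior_var_mismatch_le
    (N : ℕ) (hN : 1 ≤ N) (ε : ℝ) (hε0 : 0 ≤ ε) (hε1 : ε ≤ 1) (σ : ℝ) (hσ : 0 < σ)
    (K Kt : Matrix (Fin N) (Fin N) ℝ)
    (hK_symm : K.IsSymm) (hK_psd : ∀ x : Fin N → ℝ, 0 ≤ x ⬝ᵥ K.mulVec x)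
    (hKt_symm : Kt.IsSymm) (hKt_psd : ∀ x : Fin N → ℝ, 0 ≤ x ⬝ᵥ Kt.mulVec x)
    (hKdiff : spectralNorm' (Kt - K) ≤ N ^ 2 * ε)
    (k kt : Fin N → ℝ)
    (hk : ∑ i, (k i) ^ 2 ≤ N) (hkt : ∑ i, (kt i) ^ 2 ≤ N)
    (hkdiff : ∑ i, (kt i - k i) ^ 2 ≤ N ^ 3 * ε ^ 2) :
    |kt ⬝ᵥ (Kt + σ ^ 2 • (1 : Matrix (Fin N) (Fin N) ℝ))⁻¹.mulVec kt
      - k ⬝ᵥ (K + σ ^ 2 • (1 : Matrix (Fin N) (Fin N) ℝ))⁻¹.mulVec k| ≤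
      (3 * (σ ^ 2)⁻¹ + (σ ^ 4)⁻¹) * N ^ 3 * ε :=
  abs_posterior_var_mismatch_le_general N hN ε hε0 σ hσ K Kt hK_psd hKt_psd hKdiff k kt hk hkt
    hkdiff
end

section
/- Let N ≥ 1 be an integer, ε ∈ [0,1], σ > 0, and L̃ ≥ 0. Let K and K̃ be N×N real symmetric positive semidefinite matrices with ‖K̃ − K‖₂ ≤ N²ε, let k, k̃ ∈ ℝ^N satisfy ‖k̃‖₂² ≤ N and ‖k̃ − k‖₂² ≤ N³ε², and let y ∈ ℝ^N satisfy ‖y‖₂² ≤ N·L̃². Then |k̃ᵀ(K̃ + σ²I_N)⁻¹y − kᵀ(K + σ²I_N)⁻¹y| ≤ (σ⁻² + σ⁻⁴)·N³ε·L̃. -/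
open scoped Matrix BigOperators

/-!
With `A = K + σ²I` and `Ã = K̃ + σ²I`, both matrices satisfy `xᵀMx ≥ σ²‖x‖²`, so they are
invertible with `‖M⁻¹‖₂ ≤ σ⁻²`. The resolvent identity `Ã⁻¹ - A⁻¹ = -Ã⁻¹(K̃ - K)A⁻¹` and the
splitting `k̃ᵀÃ⁻¹y - kᵀA⁻¹y = k̃ᵀ(Ã⁻¹ - A⁻¹)y + (k̃ - k)ᵀA⁻¹y` then give, by Cauchy–Schwarz,
the bound `σ⁻⁴N³εL̃ + σ⁻²N²εL̃`.
-/

open Matrix WithLp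

section

variable {n : Type*} [Fintype n]

theorem abs_dotProduct_le_norm_mul_norm (v w : n → ℝ) :
    |v ⬝ᵥ w| ≤ ‖toLp 2 v‖ * ‖toLp 2 w‖ := by
  simpa [EuclideanSpace.inner_toLp_toLp, dotProduct_comm] using
    abs_real_inner_le_norm (toLp 2 v) (toLp 2 w)

theorem dotProduct_self_eq_norm_sq (v : n → ℝ) : v ⬝ᵥ v = ‖toLp 2 v‖ ^ 2 := by
  rw [← real_inner_self_eq_norm_sq (toLp 2 v : EuclideanSpace ℝ n),
    EuclideanSpace.inner_toLp_toLp]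
  simp

theorem norm_toLp_le_of_sum_sq_le {v : n → ℝ} {r : ℝ} (hr : 0 ≤ r)
    (h : ∑ i, v i ^ 2 ≤ r ^ 2) : ‖toLp 2 v‖ ≤ r := by
  rw [EuclideanSpace.norm_eq]
  simpa [Real.sqrt_le_left, hr] using Real.sqrt_le_sqrt h

def Matrix.IsCoerciveWith (M : Matrix n n ℝ) (c : ℝ) : Prop :=
  ∀ x, c * (x ⬝ᵥ x) ≤ x ⬝ᵥ M *ᵥ x

theorem Matrix.isCoerciveWith_add_smul_one [DecidableEq n] {K : Matrix n n ℝ}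
    (hK : ∀ x, 0 ≤ x ⬝ᵥ K *ᵥ x) (c : ℝ) : (K + c • 1).IsCoerciveWith c := by
  intro x
  rw [add_mulVec, smul_mulVec, one_mulVec, dotProduct_add, dotProduct_smul, smul_eq_mul]
  linarith [hK x]

namespace Matrix.IsCoerciveWith

variable {M : Matrix n n ℝ} {c : ℝ}

theorem isUnit [DecidableEq n] (hM : M.IsCoerciveWith c) (hc : 0 < c) : IsUnit M := by
  rw [isUnit_iff_isUnit_det, isUnit_iff_ne_zero, Ne, ← exists_mulVec_eq_zero_iff]
  rintro ⟨v, hv, hMv⟩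
  have hvv : v ⬝ᵥ v ≤ 0 := le_of_mul_le_mul_left (by simpa [hMv] using hM v) hc
  exact hv (dotProduct_self_eq_zero.mp (le_antisymm hvv (dotProduct_self_star_nonneg v)))

theorem mul_norm_le_norm_mulVec (hM : M.IsCoerciveWith c) (v : n → ℝ) :
    c * ‖toLp 2 v‖ ≤ ‖toLp 2 (M *ᵥ v)‖ := by
  have h : ‖toLp 2 v‖ * (c * ‖toLp 2 v‖) ≤ ‖toLp 2 v‖ * ‖toLp 2 (M *ᵥ v)‖ :=
    calc ‖toLp 2 v‖ * (c * ‖toLp 2 v‖) = c * (v ⬝ᵥ v) := by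
          rw [dotProduct_self_eq_norm_sq]; ring
      _ ≤ v ⬝ᵥ M *ᵥ v := hM v
      _ ≤ ‖toLp 2 v‖ * ‖toLp 2 (M *ᵥ v)‖ :=
          (le_abs_self _).trans (abs_dotProduct_le_norm_mul_norm _ _)
  rcases (norm_nonneg (toLp 2 v)).eq_or_lt with hv | hv
  · rw [← hv, mul_zero]
    exact norm_nonneg _
  · exact le_of_mul_le_mul_left h hv

theorem norm_inv_mulVec_le [DecidableEq n] (hM : M.IsCoerciveWith c) (hc : 0 < c)
    (w : n → ℝ) : ‖toLp 2 (M⁻¹ *ᵥ w)‖ ≤ c⁻¹ * ‖toLp 2 w‖ := by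
  have h := hM.mul_norm_le_norm_mulVec (M⁻¹ *ᵥ w)
  rwa [mulVec_mulVec, mul_nonsing_inv _ ((isUnit_iff_isUnit_det M).mp (hM.isUnit hc)),
    one_mulVec, ← le_inv_mul_iff₀ hc] at h

end Matrix.IsCoerciveWith

theorem abs_dotProduct_inv_mulVec_sub_le [DecidableEq n] {A B : Matrix n n ℝ} {c δ : ℝ}
    (hc : 0 < c) (hA : A.IsCoerciveWith c) (hB : B.IsCoerciveWith c) (hδ : 0 ≤ δ)
    (hBA : ∀ v, ‖toLp 2 ((B - A) *ᵥ v)‖ ≤ δ * ‖toLp 2 v‖) (k k' y : n → ℝ) :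
    |k' ⬝ᵥ B⁻¹ *ᵥ y - k ⬝ᵥ A⁻¹ *ᵥ y| ≤
      ‖toLp 2 k'‖ * (c⁻¹ * (δ * (c⁻¹ * ‖toLp 2 y‖)))
        + ‖toLp 2 (k' - k)‖ * (c⁻¹ * ‖toLp 2 y‖) := by
  have hAy : ‖toLp 2 (A⁻¹ *ᵥ y)‖ ≤ c⁻¹ * ‖toLp 2 y‖ := hA.norm_inv_mulVec_le hc y
  have hresolvent : B⁻¹ *ᵥ y - A⁻¹ *ᵥ y = -(B⁻¹ *ᵥ ((B - A) *ᵥ (A⁻¹ *ᵥ y))) := by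
    rw [← sub_mulVec, inv_sub_inv (iff_of_true (hB.isUnit hc) (hA.isUnit hc)),
      ← mulVec_mulVec, ← mulVec_mulVec, ← neg_sub B A, neg_mulVec, mulVec_neg]
  have hdiff : ‖toLp 2 (B⁻¹ *ᵥ y - A⁻¹ *ᵥ y)‖ ≤ c⁻¹ * (δ * (c⁻¹ * ‖toLp 2 y‖)) := by
    rw [hresolvent, toLp_neg, norm_neg]
    calc _ ≤ c⁻¹ * ‖toLp 2 ((B - A) *ᵥ (A⁻¹ *ᵥ y))‖ := hB.norm_inv_mulVec_le hc _
      _ ≤ c⁻¹ * (δ * ‖toLp 2 (A⁻¹ *ᵥ y)‖) := by gcongr; exact hBA _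
      _ ≤ c⁻¹ * (δ * (c⁻¹ * ‖toLp 2 y‖)) := by gcongr
  calc |k' ⬝ᵥ B⁻¹ *ᵥ y - k ⬝ᵥ A⁻¹ *ᵥ y|
      = |k' ⬝ᵥ (B⁻¹ *ᵥ y - A⁻¹ *ᵥ y) + (k' - k) ⬝ᵥ A⁻¹ *ᵥ y| := by
        rw [dotProduct_sub, sub_dotProduct]; ring_nf
    _ ≤ |k' ⬝ᵥ (B⁻¹ *ᵥ y - A⁻¹ *ᵥ y)| + |(k' - k) ⬝ᵥ A⁻¹ *ᵥ y| := abs_add_le _ _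
    _ ≤ ‖toLp 2 k'‖ * ‖toLp 2 (B⁻¹ *ᵥ y - A⁻¹ *ᵥ y)‖
          + ‖toLp 2 (k' - k)‖ * ‖toLp 2 (A⁻¹ *ᵥ y)‖ :=
        add_le_add (abs_dotProduct_le_norm_mul_norm _ _) (abs_dotProduct_le_norm_mul_norm _ _)
    _ ≤ _ := by gcongr

end

theorem norm_toLp_mulVec_le_spectralNorm' {N : ℕ} (M : Matrix (Fin N) (Fin N) ℝ)
    (v : Fin N → ℝ) : ‖toLp 2 (M *ᵥ v)‖ ≤ spectralNorm' M * ‖toLp 2 v‖ :=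
  (toEuclideanCLM (𝕜 := ℝ) M).le_opNorm (toLp 2 v)

theorem abs_posterior_mean_mismatch_le_general
    (N : ℕ) (hN : 1 ≤ N) (ε : ℝ) (hε0 : 0 ≤ ε) (σ : ℝ) (hσ : 0 < σ)
    (Lt : ℝ) (hLt : 0 ≤ Lt)
    (K Kt : Matrix (Fin N) (Fin N) ℝ)
    (hK_psd : ∀ x : Fin N → ℝ, 0 ≤ x ⬝ᵥ K.mulVec x)
    (hKt_psd : ∀ x : Fin N → ℝ, 0 ≤ x ⬝ᵥ Kt.mulVec x)
    (hKdiff : spectralNorm' (Kt - K) ≤ N ^ 2 * ε)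
    (k kt : Fin N → ℝ)
    (hkt : ∑ i, (kt i) ^ 2 ≤ N)
    (hkdiff : ∑ i, (kt i - k i) ^ 2 ≤ N ^ 3 * ε ^ 2)
    (y : Fin N → ℝ) (hy : ∑ i, (y i) ^ 2 ≤ N * Lt ^ 2) :
    |kt ⬝ᵥ (Kt + σ ^ 2 • (1 : Matrix (Fin N) (Fin N) ℝ))⁻¹.mulVec y
      - k ⬝ᵥ (K + σ ^ 2 • (1 : Matrix (Fin N) (Fin N) ℝ))⁻¹.mulVec y| ≤
      ((σ ^ 2)⁻¹ + (σ ^ 4)⁻¹) * N ^ 3 * ε * Lt := by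
  have hmismatch := abs_dotProduct_inv_mulVec_sub_le (pow_pos hσ 2)
    (isCoerciveWith_add_smul_one hK_psd _) (isCoerciveWith_add_smul_one hKt_psd _)
    (by positivity : (0 : ℝ) ≤ N ^ 2 * ε)
    (fun v => by
      rw [add_sub_add_right_eq_sub]
      exact (norm_toLp_mulVec_le_spectralNorm' _ v).trans (by gcongr)) k kt y
  set s := Real.sqrt N
  have hs : s ^ 2 = N := Real.sq_sqrt (Nat.cast_nonneg N)
  have hkt' : ‖toLp 2 kt‖ ≤ s := norm_toLp_le_of_sum_sq_le (by positivity) (hs ▸ hkt)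
  have hkdiff' : ‖toLp 2 (kt - k)‖ ≤ s ^ 3 * ε :=
    norm_toLp_le_of_sum_sq_le (by positivity) (by simpa [← hs, ← pow_mul, mul_pow] using hkdiff)
  have hy' : ‖toLp 2 y‖ ≤ s * Lt :=
    norm_toLp_le_of_sum_sq_le (by positivity) (by simpa [← hs, mul_pow] using hy)
  have hN23 : (N : ℝ) ^ 2 ≤ N ^ 3 := pow_le_pow_right₀ (by exact_mod_cast hN) (by norm_num)
  calc _ ≤ _ := hmismatch
    _ ≤ s * ((σ ^ 2)⁻¹ * (N ^ 2 * ε * ((σ ^ 2)⁻¹ * (s * Lt))))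
          + s ^ 3 * ε * ((σ ^ 2)⁻¹ * (s * Lt)) := by gcongr
    _ = (σ ^ 2)⁻¹ * N ^ 2 * ε * Lt + (σ ^ 4)⁻¹ * N ^ 3 * ε * Lt := by
        rw [← hs]; field_simp; ring
    _ ≤ ((σ ^ 2)⁻¹ + (σ ^ 4)⁻¹) * N ^ 3 * ε * Lt := by
        rw [add_mul, add_mul, add_mul]; gcongr

/-- Mean part of the mismatched-posterior lemma: the posterior means built from
`(K̃, k̃)` and `(K, k)` differ by at most `(σ⁻² + σ⁻⁴)N³εL̃`. -/
theorem abs_posterior_mean_mismatch_le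
    (N : ℕ) (hN : 1 ≤ N) (ε : ℝ) (hε0 : 0 ≤ ε) (hε1 : ε ≤ 1) (σ : ℝ) (hσ : 0 < σ)
    (Lt : ℝ) (hLt : 0 ≤ Lt)
    (K Kt : Matrix (Fin N) (Fin N) ℝ)
    (hK_symm : K.IsSymm) (hK_psd : ∀ x : Fin N → ℝ, 0 ≤ x ⬝ᵥ K.mulVec x)
    (hKt_symm : Kt.IsSymm) (hKt_psd : ∀ x : Fin N → ℝ, 0 ≤ x ⬝ᵥ Kt.mulVec x)
    (hKdiff : spectralNorm' (Kt - K) ≤ N ^ 2 * ε)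
    (k kt : Fin N → ℝ)
    (hkt : ∑ i, (kt i) ^ 2 ≤ N)
    (hkdiff : ∑ i, (kt i - k i) ^ 2 ≤ N ^ 3 * ε ^ 2)
    (y : Fin N → ℝ) (hy : ∑ i, (y i) ^ 2 ≤ N * Lt ^ 2) :
    |kt ⬝ᵥ (Kt + σ ^ 2 • (1 : Matrix (Fin N) (Fin N) ℝ))⁻¹.mulVec y
      - k ⬝ᵥ (K + σ ^ 2 • (1 : Matrix (Fin N) (Fin N) ℝ))⁻¹.mulVec y| ≤
      ((σ ^ 2)⁻¹ + (σ ^ 4)⁻¹) * N ^ 3 * ε * Lt :=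
  abs_posterior_mean_mismatch_le_general N hN ε hε0 σ hσ Lt hLt K Kt hK_psd hKt_psd hKdiff k kt hkt
    hkdiff y hy
end

section
/- Let K be a T×T real symmetric positive semidefinite matrix with K_{tt} ≤ 1 for all t, and let σ > 0. Define s_1 = K_{11}, and for 2 ≤ t ≤ T define s_t = K_{tt} − kᵀ(K^{(t−1)} + σ²I_{t−1})⁻¹k, where K^{(t−1)} is the leading (t−1)×(t−1) principal submatrix of K and k = (K_{1t}, …, K_{(t−1)t})ᵀ. Then 0 ≤ s_t ≤ 1 for every t, and ∑_{t=1}^T s_t ≤ log det(I_T + σ⁻²K) / log(1 + σ⁻²). -/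
open scoped Matrix

/-!
Splitting off the last point, the Schur complement formula gives
`det (K⁽ᵗ⁺¹⁾ + σ²I) = det (K⁽ᵗ⁾ + σ²I) * (σ² + s_t)`, so `det (I + σ⁻²K) = ∏ₜ (1 + σ⁻² s_t)`.
Each `s_t` is the Schur complement of the PSD matrix `K⁽ᵗ⁺¹⁾ + diag(σ²I, 0)`, hence `0 ≤ s_t`,
and `s_t ≤ K_tt ≤ 1` because `(K⁽ᵗ⁾ + σ²I)⁻¹` is positive definite. Concavity of `log`
(Bernoulli's inequality) gives `s log (1 + c) ≤ log (1 + c s)` for `s ∈ [0, 1]`; summing over `t`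
yields the bound.
-/

namespace Matrix

theorem submatrix_finSumFinEquiv_eq_fromBlocks {α : Type*} {n : ℕ}
    (M : Matrix (Fin (n + 1)) (Fin (n + 1)) α) :
    M.submatrix finSumFinEquiv finSumFinEquiv =
      fromBlocks (M.submatrix Fin.castSucc Fin.castSucc)
        (replicateCol (Fin 1) fun i => M i.castSucc (Fin.last n))
        (replicateRow (Fin 1) fun j => M (Fin.last n) j.castSucc)
        (of fun _ _ => M (Fin.last n) (Fin.last n)) := by
  have hlast : ∀ j : Fin 1, (finSumFinEquiv (Sum.inr j) : Fin (n + 1)) = Fin.last n := by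
    intro j; rw [Subsingleton.elim j 0]; rfl
  ext (i | i) (j | j) <;> simp [hlast] <;> rfl

theorem replicateRow_mul_mul_replicateCol {m ι R : Type*} [Fintype m] [NonUnitalSemiring R]
    (v : m → R) (A : Matrix m m R) (w : m → R) :
    replicateRow ι v * A * replicateCol ι w = of fun _ _ => v ⬝ᵥ A *ᵥ w := by
  rw [← replicateRow_vecMul, replicateRow_mul_replicateCol, dotProduct_mulVec]

theorem det_succ_eq_det_mul_schur {𝕜 : Type*} [Field 𝕜] {n : ℕ}
    (M : Matrix (Fin (n + 1)) (Fin (n + 1)) 𝕜)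
    (hA : IsUnit (M.submatrix Fin.castSucc Fin.castSucc).det) :
    M.det = (M.submatrix Fin.castSucc Fin.castSucc).det *
      (M (Fin.last n) (Fin.last n) - (fun j => M (Fin.last n) j.castSucc) ⬝ᵥ
        (M.submatrix Fin.castSucc Fin.castSucc)⁻¹ *ᵥ fun i => M i.castSucc (Fin.last n)) := by
  have := (M.submatrix Fin.castSucc Fin.castSucc).invertibleOfIsUnitDet hA
  rw [← det_submatrix_equiv_self finSumFinEquiv, submatrix_finSumFinEquiv_eq_fromBlocks,
    det_fromBlocks₁₁, invOf_eq_nonsing_inv, replicateRow_mul_mul_replicateCol, det_fin_one]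
  rfl

theorem PosSemidef.fromBlocks_zero {m n R : Type*} [Fintype m] [Finite n] [DecidableEq m]
    [Ring R] [PartialOrder R] [StarRing R]
    {E : Matrix m m R} (hE : E.PosSemidef) : (fromBlocks E 0 0 (0 : Matrix n n R)).PosSemidef := by
  have hconj : fromBlocks E 0 0 (0 : Matrix n n R) =
      (fromCols (1 : Matrix m m R) (0 : Matrix m n R))ᴴ * E *
        fromCols (1 : Matrix m m R) (0 : Matrix m n R) := by
    rw [conjTranspose_fromCols_eq_fromRows_conjTranspose, fromRows_mul, fromRows_mul_fromCols]
    simp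
  rw [hconj]
  exact hE.conjTranspose_mul_mul_same _

theorem PosSemidef.schur_add_nonneg {𝕜 : Type*} [Field 𝕜] [PartialOrder 𝕜] [StarRing 𝕜]
    [StarOrderedRing 𝕜] {n : ℕ}
    {N : Matrix (Fin (n + 1)) (Fin (n + 1)) 𝕜} (hN : N.PosSemidef)
    {E : Matrix (Fin n) (Fin n) 𝕜} (hE : E.PosSemidef)
    (hA : (N.submatrix Fin.castSucc Fin.castSucc + E).PosDef) :
    0 ≤ N (Fin.last n) (Fin.last n) - (fun j => N (Fin.last n) j.castSucc) ⬝ᵥ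
      (N.submatrix Fin.castSucc Fin.castSucc + E)⁻¹ *ᵥ fun i => N i.castSucc (Fin.last n) := by
  have := hA.isUnit.invertible
  have hrow : (replicateCol (Fin 1) fun i : Fin n => N i.castSucc (Fin.last n))ᴴ =
      replicateRow (Fin 1) fun j : Fin n => N (Fin.last n) j.castSucc := by
    ext _ j
    simpa using hN.isHermitian.apply (Fin.last n) j.castSucc
  have hblocks : (fromBlocks (N.submatrix Fin.castSucc Fin.castSucc + E)
      (replicateCol (Fin 1) fun i : Fin n => N i.castSucc (Fin.last n))
      (replicateCol (Fin 1) fun i : Fin n => N i.castSucc (Fin.last n))ᴴ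
      (of fun _ _ => N (Fin.last n) (Fin.last n))).PosSemidef := by
    have hsplit := congrArg (· + fromBlocks E 0 0 (0 : Matrix (Fin 1) (Fin 1) 𝕜))
      (submatrix_finSumFinEquiv_eq_fromBlocks N)
    simp only [fromBlocks_add, add_zero] at hsplit
    rw [hrow, ← hsplit]
    exact (hN.submatrix _).add hE.fromBlocks_zero
  have := ((PosDef.fromBlocks₁₁ _ _ hA).mp hblocks).diag_nonneg (i := 0)
  simpa [hrow, replicateRow_mul_mul_replicateCol] using this

theorem PosSemidef.posDef_add_smul_one {n : Type*} [Fintype n] [DecidableEq n]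
    {K : Matrix n n ℝ} (hK : K.PosSemidef) {ν : ℝ} (hν : 0 < ν) : (K + ν • 1).PosDef :=
  PosDef.posSemidef_add hK (PosDef.one.smul hν)

end Matrix

theorem Real.mul_log_one_add_le_log_one_add_mul {c x : ℝ} (hc : -1 < c) (hx₀ : 0 ≤ x)
    (hx₁ : x ≤ 1) : x * Real.log (1 + c) ≤ Real.log (1 + c * x) := by
  rw [← Real.log_rpow (by linarith), mul_comm c]
  exact Real.log_le_log (Real.rpow_pos_of_pos (by linarith) x)
    (rpow_one_add_le_one_add_mul_self hc.le hx₀ hx₁)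

/-- Points are `0`-indexed: at `t` we condition on the points `0, …, t - 1`, observed with noise
variance `ν`; for `t = 0` the vectors are empty and the value is `K 0 0`. -/
noncomputable def posteriorVariance {T : ℕ} (ν : ℝ) (K : Matrix (Fin T) (Fin T) ℝ) (t : Fin T) :
    ℝ :=
  K t t - (fun i : Fin t.val => K (Fin.castLE t.isLt.le i) t) ⬝ᵥ
    (K.submatrix (Fin.castLE t.isLt.le) (Fin.castLE t.isLt.le) + ν • 1)⁻¹ *ᵥ
      fun i : Fin t.val => K (Fin.castLE t.isLt.le i) t

section posteriorVariance

open Matrix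

variable {T : ℕ} {ν : ℝ}

theorem posteriorVariance_castSucc (K : Matrix (Fin (T + 1)) (Fin (T + 1)) ℝ) (t : Fin T) :
    posteriorVariance ν K t.castSucc =
      posteriorVariance ν (K.submatrix Fin.castSucc Fin.castSucc) t :=
  rfl

theorem posteriorVariance_last {K : Matrix (Fin (T + 1)) (Fin (T + 1)) ℝ} (hK : K.IsSymm) :
    posteriorVariance ν K (Fin.last T) = K (Fin.last T) (Fin.last T) -
      (fun j : Fin T => K (Fin.last T) j.castSucc) ⬝ᵥ
        (K.submatrix Fin.castSucc Fin.castSucc + ν • 1)⁻¹ *ᵥ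
          fun i : Fin T => K i.castSucc (Fin.last T) := by
  simp only [posteriorVariance, ← hK.apply (Fin.last T)]
  rfl

theorem posteriorVariance_nonneg {K : Matrix (Fin T) (Fin T) ℝ} (hK : K.PosSemidef) (hν : 0 < ν)
    (t : Fin T) : 0 ≤ posteriorVariance ν K t := by
  induction T with
  | zero => exact t.elim0
  | succ T ih =>
    induction t using Fin.lastCases with
    | last =>
      rw [posteriorVariance_last (isHermitian_iff_isSymm.mp hK.isHermitian)]
      exact hK.schur_add_nonneg (PosDef.one.smul hν).posSemidef
        ((hK.submatrix _).posDef_add_smul_one hν)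
    | cast t =>
      rw [posteriorVariance_castSucc]
      exact ih (hK.submatrix _) t

theorem posteriorVariance_le_diag {K : Matrix (Fin T) (Fin T) ℝ} (hK : K.PosSemidef)
    (hν : 0 < ν) (t : Fin T) : posteriorVariance ν K t ≤ K t t := by
  have hquad := ((hK.submatrix (Fin.castLE t.isLt.le)).posDef_add_smul_one hν).inv.posSemidef
    |>.dotProduct_mulVec_nonneg fun i => K (Fin.castLE t.isLt.le i) t
  rw [star_trivial] at hquad
  exact sub_le_self _ hquad

theorem det_add_smul_one_eq_prod_posteriorVariance {K : Matrix (Fin T) (Fin T) ℝ}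
    (hK : K.PosSemidef) (hν : 0 < ν) : (K + ν • 1).det = ∏ t, (ν + posteriorVariance ν K t) := by
  induction T with
  | zero => simp
  | succ T ih =>
    have hsub : (K + ν • 1).submatrix Fin.castSucc Fin.castSucc =
        K.submatrix Fin.castSucc Fin.castSucc + ν • 1 := by
      ext i j
      simp [one_apply]
    have hunit := ((hK.submatrix Fin.castSucc).posDef_add_smul_one hν).isUnit
    rw [det_succ_eq_det_mul_schur _ (by rwa [hsub, ← isUnit_iff_isUnit_det]), hsub,
      ih (hK.submatrix _), Fin.prod_univ_castSucc,
      posteriorVariance_last (isHermitian_iff_isSymm.mp hK.isHermitian)]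
    simp only [posteriorVariance_castSucc]
    congr 1
    simp only [Matrix.add_apply, Matrix.smul_apply, one_apply, Fin.castSucc_ne_last,
      (Fin.castSucc_ne_last _).symm, ↓reduceIte, smul_eq_mul, mul_one, mul_zero, add_zero]
    ring

theorem det_one_add_inv_smul_eq_prod_posteriorVariance {K : Matrix (Fin T) (Fin T) ℝ}
    (hK : K.PosSemidef) (hν : 0 < ν) :
    (1 + ν⁻¹ • K).det = ∏ t, (1 + ν⁻¹ * posteriorVariance ν K t) := by
  have hscale : 1 + ν⁻¹ • K = ν⁻¹ • (K + ν • 1) := by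
    rw [smul_add, smul_smul, inv_mul_cancel₀ hν.ne', one_smul, add_comm]
  rw [hscale, det_smul, det_add_smul_one_eq_prod_posteriorVariance hK hν, Fintype.card_fin,
    ← Fin.prod_const, ← Finset.prod_mul_distrib]
  congr! 1 with t
  field_simp

end posteriorVariance

/-- The posterior variances `s_t` of a PSD kernel matrix with unit-bounded diagonal lie in
`[0,1]`, and their sum is bounded by `log det(I + σ⁻²K) / log(1 + σ⁻²)`. -/
theorem sum_posterior_var_le_log_det_div
    (T : ℕ) (σ : ℝ) (hσ : 0 < σ)
    (K : Matrix (Fin T) (Fin T) ℝ)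
    (h_symm : K.IsSymm) (h_psd : ∀ x : Fin T → ℝ, 0 ≤ x ⬝ᵥ K.mulVec x)
    (h_diag : ∀ t, K t t ≤ 1)
    (s : Fin T → ℝ)
    (hs : ∀ t : Fin T,
      s t = K t t -
        (fun i : Fin t.val => K (Fin.castLE t.isLt.le i) t) ⬝ᵥ
          ((K.submatrix (Fin.castLE t.isLt.le) (Fin.castLE t.isLt.le)
              + σ ^ 2 • (1 : Matrix (Fin t.val) (Fin t.val) ℝ))⁻¹.mulVec
            (fun i : Fin t.val => K (Fin.castLE t.isLt.le i) t))) :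
    (∀ t, 0 ≤ s t ∧ s t ≤ 1) ∧
      ∑ t : Fin T, s t ≤
        Real.log (1 + (σ ^ 2)⁻¹ • K).det / Real.log (1 + (σ ^ 2)⁻¹) := by
  have hK : K.PosSemidef :=
    .of_dotProduct_mulVec_nonneg (Matrix.isHermitian_iff_isSymm.mpr h_symm) (by simpa using h_psd)
  have hσ2 : 0 < σ ^ 2 := by positivity
  have hinv : 0 < (σ ^ 2)⁻¹ := by positivity
  obtain rfl : s = posteriorVariance (σ ^ 2) K := funext hs
  have hs_mem (t : Fin T) :
      0 ≤ posteriorVariance (σ ^ 2) K t ∧ posteriorVariance (σ ^ 2) K t ≤ 1 :=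
    ⟨posteriorVariance_nonneg hK hσ2 t, (posteriorVariance_le_diag hK hσ2 t).trans (h_diag t)⟩
  refine ⟨hs_mem, ?_⟩
  rw [le_div_iff₀ (Real.log_pos (by linarith)),
    det_one_add_inv_smul_eq_prod_posteriorVariance hK hσ2,
    Real.log_prod fun t _ => (add_pos_of_pos_of_nonneg one_pos
      (mul_nonneg hinv.le (hs_mem t).1)).ne', Finset.sum_mul]
  exact Finset.sum_le_sum fun t _ =>
    Real.mul_log_one_add_le_log_one_add_mul (by linarith) (hs_mem t).1 (hs_mem t).2
end

section
/- Let ε ∈ [0,1], σ > 0, and let N ≥ 1 and m ≥ 1 be integers with T = mN. Let K be a T×T real symmetric positive semidefinite matrix with all entries in [0,1], let D_T be the T×T matrix with entries (D_T)_{ij} = (1−ε)^{|i−j|/2}, and for i = 1,…,m let K^{(i)} denote the i-th N×N diagonal block of K (rows and columns (i−1)N+1 through iN). Then log det(I_T + σ⁻²(K ∘ D_T)) ≤ ∑_{i=1}^m log det(I_N + σ⁻²K^{(i)}) + m·σ⁻²·N³ε. -/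
/-!
Write `r = √(1 - ε)`, so that `D_{st} = r ^ |s - t|` is the Kac–Murdock–Szegő matrix, the
covariance of a stationary AR(1) process; it factors as `L Lᵀ` and is therefore positive
semidefinite, and so is `K ∘ D` by the Schur product theorem. Fischer's inequality bounds
`det (I + σ⁻² K ∘ D)` by the product of the determinants of its diagonal blocks. Inside a block
`|D_{ab} - 1| ≤ N ε`, hence `I + σ⁻² (K ∘ D)⁽ⁱ⁾ ≤ (1 + σ⁻² N² ε) (I + σ⁻² K⁽ⁱ⁾)` in the Loewner
order, and `log (1 + u) ≤ u` turns the factor `(1 + σ⁻² N² ε) ^ N` into the additive `σ⁻² N³ ε`.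
-/

open scoped Matrix BigOperators

/-- The index of the `a`-th row/column of the `i`-th `N×N` diagonal block inside
a `(m·N)×(m·N)` matrix. -/
def blockIdx {m N : ℕ} (i : Fin m) (a : Fin N) : Fin (m * N) :=
  ⟨i.val * N + a.val, by
    calc i.val * N + a.val < i.val * N + N := by omega
      _ = (i.val + 1) * N := by ring
      _ ≤ m * N := Nat.mul_le_mul_right N i.isLt⟩

open Matrix

def finSuccProdEquiv (m : ℕ) (n : Type*) : n ⊕ (Fin m × n) ≃ Fin (m + 1) × n where
  toFun := Sum.elim (fun a => (0, a)) (fun p => (p.1.succ, p.2))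
  invFun p := Fin.cases (Sum.inl p.2) (fun i => Sum.inr (i, p.2)) p.1
  left_inv x := by rcases x with a | ⟨i, a⟩ <;> simp
  right_inv := by
    rintro ⟨i, a⟩
    induction i using Fin.cases <;> simp

namespace Matrix

variable {n : Type*} [Fintype n] [DecidableEq n]

open scoped Pointwise in
theorem PosSemidef.one_le_det_one_add_s13 {Q : Matrix n n ℝ} (hQ : Q.PosSemidef) :
    1 ≤ (1 + Q).det := by
  have hH : (1 + Q).IsHermitian := isHermitian_one.add hQ.1
  rw [hH.det_eq_prod_eigenvalues]
  refine Finset.one_le_prod fun i _ => ?_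
  obtain ⟨_, rfl, μ, hμ, hi⟩ : hH.eigenvalues i ∈ ({1} + spectrum ℝ Q : Set ℝ) := by
    rw [spectrum.singleton_add_eq, map_one]
    exact hH.eigenvalues_mem_spectrum_real i
  have hμ0 : 0 ≤ μ := (posSemidef_iff_isHermitian_and_spectrum_nonneg.mp hQ).2 hμ
  simp only [RCLike.ofReal_real_eq_id, id_eq, ← hi]
  linarith

open scoped MatrixOrder in
theorem PosDef.det_le_det_of_posSemidef_sub {A B : Matrix n n ℝ} (hA : A.PosDef)
    (hBA : (B - A).PosSemidef) : A.det ≤ B.det := by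
  obtain ⟨S, hS, rfl⟩ : ∃ S : Matrix n n ℝ, S.IsHermitian ∧ A = S * S :=
    ⟨CFC.sqrt A, (CFC.sqrt_nonneg A).posSemidef.isHermitian,
      (CFC.sqrt_mul_sqrt_self A hA.posSemidef.nonneg).symm⟩
  have hdetS : 0 < S.det * S.det := by simpa [det_mul] using hA.det_pos
  have hS_unit : IsUnit S.det := isUnit_iff_ne_zero.mpr (by rintro h; simp [h] at hdetS)
  set Q := S⁻¹ * (B - S * S) * S⁻¹
  have hQ : Q.PosSemidef := by
    simpa only [hS.inv.eq] using hBA.conjTranspose_mul_mul_same S⁻¹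
  have hB : B = S * (1 + Q) * S := by
    simp only [Q, Matrix.mul_add, Matrix.add_mul, Matrix.mul_assoc, S.nonsing_inv_mul hS_unit,
      Matrix.mul_one, ← Matrix.mul_assoc S S⁻¹, S.mul_nonsing_inv hS_unit, Matrix.one_mul]
    abel
  rw [hB, det_mul, det_mul, det_mul]
  nlinarith [hQ.one_le_det_one_add_s13]

/-- The Schur complement `D - Bᴴ A⁻¹ B` is positive definite and lies below `D`. -/
theorem PosDef.det_le_det_toBlocks₁₁_mul_det_toBlocks₂₂ {m : Type*} [Fintype m] [DecidableEq m]
    {M : Matrix (m ⊕ n) (m ⊕ n) ℝ} (hM : M.PosDef) :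
    M.det ≤ M.toBlocks₁₁.det * M.toBlocks₂₂.det := by
  obtain ⟨A, B, C, D, rfl⟩ : ∃ A B C D, M = fromBlocks A B C D :=
    ⟨_, _, _, _, (fromBlocks_toBlocks M).symm⟩
  obtain ⟨-, rfl, -, -⟩ := isHermitian_fromBlocks_iff.mp hM.isHermitian
  have hA : A.PosDef := hM.submatrix Sum.inl_injective
  have := A.invertibleOfIsUnitDet hA.det_pos.ne'.isUnit
  have hdet := det_fromBlocks₁₁ A B Bᴴ D
  rw [invOf_eq_nonsing_inv] at hdet
  have hSchur : (D - Bᴴ * A⁻¹ * B).PosDef := by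
    refine ((PosDef.fromBlocks₁₁ B D hA).mp hM.posSemidef).posDef_iff_det_ne_zero.mpr ?_
    exact fun h => hM.det_pos.ne' (by rw [hdet, h, mul_zero])
  rw [toBlocks_fromBlocks₁₁, toBlocks_fromBlocks₂₂, hdet]
  refine mul_le_mul_of_nonneg_left (hSchur.det_le_det_of_posSemidef_sub ?_) hA.det_pos.le
  simpa using hA.inv.posSemidef.conjTranspose_mul_mul_same B

theorem PosDef.det_le_prod_det_blocks {m : ℕ} {M : Matrix (Fin m × n) (Fin m × n) ℝ}
    (hM : M.PosDef) : M.det ≤ ∏ i, (M.submatrix (Prod.mk i) (Prod.mk i)).det := by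
  induction m with
  | zero => simp
  | succ m ih =>
    have htail : (M.submatrix (fun p : Fin m × n => (p.1.succ, p.2))
        (fun p => (p.1.succ, p.2))).PosDef :=
      hM.submatrix fun p q h => by simpa [Prod.ext_iff] using h
    calc M.det = (M.submatrix (finSuccProdEquiv m n) (finSuccProdEquiv m n)).det :=
          (det_submatrix_equiv_self _ M).symm
      _ ≤ (M.submatrix (Prod.mk 0) (Prod.mk 0)).det * (M.submatrix
            (fun p : Fin m × n => (p.1.succ, p.2)) (fun p => (p.1.succ, p.2))).det :=
          (hM.submatrix (finSuccProdEquiv m n).injective).det_le_det_toBlocks₁₁_mul_det_toBlocks₂₂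
      _ ≤ (M.submatrix (Prod.mk 0) (Prod.mk 0)).det *
            ∏ i : Fin m, (M.submatrix (Prod.mk i.succ) (Prod.mk i.succ)).det :=
          mul_le_mul_of_nonneg_left (ih htail)
            (hM.submatrix (Prod.mk_right_injective 0)).det_pos.le
      _ = ∏ i, (M.submatrix (Prod.mk i) (Prod.mk i)).det := by rw [Fin.prod_univ_succ]

omit [DecidableEq n] in
theorem dotProduct_mulVec_le_of_abs_le {E : Matrix n n ℝ} {δ : ℝ} (hδ : 0 ≤ δ)
    (hE : ∀ a b, |E a b| ≤ δ) (x : n → ℝ) :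
    x ⬝ᵥ E *ᵥ x ≤ Fintype.card n * δ * (x ⬝ᵥ x) := by
  calc x ⬝ᵥ E *ᵥ x = ∑ a, ∑ b, x a * E a b * x b := by
        simp only [dotProduct, mulVec, Finset.mul_sum, mul_assoc]
    _ ≤ ∑ a, ∑ b, |x a| * δ * |x b| := by
        refine Finset.sum_le_sum fun a _ => Finset.sum_le_sum fun b _ => ?_
        calc x a * E a b * x b ≤ |x a * E a b * x b| := le_abs_self _
          _ = |x a| * |E a b| * |x b| := by rw [abs_mul, abs_mul]
          _ ≤ |x a| * δ * |x b| := by gcongr; exact hE a b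
    _ = δ * (∑ a, |x a|) ^ 2 := by
        rw [sq, Finset.sum_mul_sum, Finset.mul_sum]
        simp only [Finset.mul_sum]
        exact Finset.sum_congr rfl fun a _ => Finset.sum_congr rfl fun b _ => by ring
    _ ≤ δ * (Fintype.card n * ∑ a, |x a| ^ 2) := by
        gcongr; exact sq_sum_le_card_mul_sum_sq
    _ = Fintype.card n * δ * (x ⬝ᵥ x) := by
        simp only [sq_abs, dotProduct, ← sq]; ring

theorem PosSemidef.log_det_one_add_smul_le_of_abs_sub_le {A B : Matrix n n ℝ}
    (hA : A.PosSemidef) (hB : B.PosSemidef) {c δ : ℝ} (hc : 0 ≤ c) (hδ : 0 ≤ δ)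
    (hAB : ∀ a b, |A a b - B a b| ≤ δ) :
    Real.log (1 + c • A).det ≤ Real.log (1 + c • B).det + c * Fintype.card n ^ 2 * δ := by
  have hu : 0 ≤ c * Fintype.card n * δ := by positivity
  have hX : (1 + c • A).PosDef := PosDef.one.add_posSemidef (hA.smul hc)
  have hY : (1 + c • B).PosDef := PosDef.one.add_posSemidef (hB.smul hc)
  have hXY : ((1 + c * Fintype.card n * δ) • (1 + c • B) - (1 + c • A)).PosSemidef := by
    refine .of_dotProduct_mulVec_nonneg ((hY.1.smul (.all _)).sub hX.1) fun x => ?_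
    have hE := dotProduct_mulVec_le_of_abs_le hδ (E := A - B) hAB x
    have hBx := hB.dotProduct_mulVec_nonneg x
    simp only [star_trivial, sub_mulVec, add_mulVec, smul_mulVec, one_mulVec, dotProduct_sub,
      dotProduct_add, dotProduct_smul, smul_eq_mul] at hE hBx ⊢
    nlinarith [mul_le_mul_of_nonneg_left hE hc, mul_nonneg hu (mul_nonneg hc hBx)]
  have hdet := hX.det_le_det_of_posSemidef_sub hXY
  rw [det_smul] at hdet
  calc Real.log (1 + c • A).det
      ≤ Real.log ((1 + c * Fintype.card n * δ) ^ Fintype.card n * (1 + c • B).det) :=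
        Real.log_le_log hX.det_pos hdet
    _ = Fintype.card n * Real.log (1 + c * Fintype.card n * δ) + Real.log (1 + c • B).det := by
        rw [Real.log_mul (by positivity) hY.det_pos.ne', Real.log_pow]
    _ ≤ Fintype.card n * (c * Fintype.card n * δ) + Real.log (1 + c • B).det := by
        gcongr
        linarith [Real.log_le_sub_one_of_pos (by positivity : 0 < 1 + c * Fintype.card n * δ)]
    _ = _ := by ring

end Matrix

theorem blockIdx_eq_finProdFinEquiv {m N : ℕ} (i : Fin m) (a : Fin N) :
    blockIdx i a = finProdFinEquiv (i, a) :=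
  Fin.ext (by simp only [blockIdx, finProdFinEquiv_apply_val]; ring)

theorem Matrix.PosSemidef.log_det_one_add_le_sum_blocks {m N : ℕ}
    {M : Matrix (Fin (m * N)) (Fin (m * N)) ℝ} (hM : M.PosSemidef) :
    Real.log (1 + M).det ≤
      ∑ i : Fin m, Real.log (1 + M.submatrix (blockIdx i) (blockIdx i)).det := by
  have hPD : (1 + M).PosDef := PosDef.one.add_posSemidef hM
  have hblock : ∀ i : Fin m, ((1 + M).submatrix finProdFinEquiv finProdFinEquiv).submatrix
      (Prod.mk i) (Prod.mk i) = 1 + M.submatrix (blockIdx i) (blockIdx i) := fun i => by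
    have hi : finProdFinEquiv ∘ Prod.mk i = blockIdx (N := N) i :=
      funext fun a => (blockIdx_eq_finProdFinEquiv i a).symm
    have hinj : Function.Injective (blockIdx (N := N) i) :=
      hi ▸ finProdFinEquiv.injective.comp (Prod.mk_right_injective i)
    rw [submatrix_submatrix, hi, submatrix_add, Pi.add_apply, Pi.add_apply, submatrix_one _ hinj]
  have hprod := (hPD.submatrix finProdFinEquiv.injective).det_le_prod_det_blocks
  simp only [det_submatrix_equiv_self, hblock] at hprod
  rw [← Real.log_prod fun i _ => (PosDef.one.add_posSemidef (hM.submatrix _)).det_pos.ne']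
  exact Real.log_le_log hPD.det_pos hprod

noncomputable def kmsMatrix (n : ℕ) (r : ℝ) : Matrix (Fin n) (Fin n) ℝ :=
  of fun s t => r ^ Nat.dist s t

/-- The lower triangular factor `L` of `kmsMatrix n r = L Lᵀ`, read off from the AR(1)
representation `X_t = r ^ t Z_0 + √(1 - r²) ∑_{1 ≤ k ≤ t} r ^ (t - k) Z_k` with `Z` white noise. -/
noncomputable def kmsFactor (r : ℝ) (t k : ℕ) : ℝ :=
  if k ≤ t then r ^ (t - k) * (if k = 0 then 1 else √(1 - r ^ 2)) else 0

namespace kmsFactor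

variable {r : ℝ} {t k : ℕ}

theorem of_lt (h : t < k) : kmsFactor r t k = 0 := if_neg (by omega)

theorem succ_left (h : k ≤ t) : kmsFactor r (t + 1) k = r * kmsFactor r t k := by
  simp only [kmsFactor, if_pos h, if_pos (h.trans t.le_succ), Nat.succ_sub h, pow_succ]
  ring

theorem succ_add_succ (k d : ℕ) : kmsFactor r (k + 1 + d) (k + 1) = r ^ d * √(1 - r ^ 2) := by
  simp [kmsFactor]

theorem succ_self (k : ℕ) : kmsFactor r (k + 1) (k + 1) = √(1 - r ^ 2) := by
  simpa using succ_add_succ (r := r) k 0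

theorem zero_right : kmsFactor r t 0 = r ^ t := by simp [kmsFactor]

theorem sum_range_mul_add (hr : r ^ 2 ≤ 1) (s d : ℕ) :
    ∑ k ∈ Finset.range (s + 1), kmsFactor r s k * kmsFactor r (s + d) k = r ^ d := by
  induction s with
  | zero => simp [zero_right]
  | succ s ih =>
    have hstep : ∀ k ∈ Finset.range (s + 1), kmsFactor r (s + 1) k * kmsFactor r (s + 1 + d) k =
        r ^ 2 * (kmsFactor r s k * kmsFactor r (s + d) k) := fun k hk => by
      have hk : k ≤ s := Nat.lt_succ_iff.mp (Finset.mem_range.mp hk)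
      rw [Nat.add_right_comm, succ_left hk, succ_left (hk.trans (Nat.le_add_right s d))]
      ring
    rw [Finset.sum_range_succ, Finset.sum_congr rfl hstep, ← Finset.mul_sum, ih, succ_add_succ,
      succ_self]
    linear_combination r ^ d * Real.mul_self_sqrt (sub_nonneg.mpr hr)

theorem sum_range_mul (hr : r ^ 2 ≤ 1) {n s t : ℕ} (hs : s < n) (ht : t < n) :
    ∑ k ∈ Finset.range n, kmsFactor r s k * kmsFactor r t k = r ^ Nat.dist s t := by
  wlog hst : s ≤ t generalizing s t
  · simp_rw [mul_comm (kmsFactor r s _), Nat.dist_comm s t]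
    exact this ht hs (le_of_not_ge hst)
  obtain ⟨d, rfl⟩ := Nat.exists_eq_add_of_le hst
  rw [Nat.dist_eq_sub_of_le hst, Nat.add_sub_cancel_left, ← sum_range_mul_add hr s d]
  refine (Finset.sum_subset (Finset.range_subset_range.mpr hs) fun k _ hk => ?_).symm
  rw [of_lt (by simpa using hk), zero_mul]

end kmsFactor

theorem kmsMatrix_eq_mul_transpose {r : ℝ} (hr : r ^ 2 ≤ 1) (n : ℕ) :
    kmsMatrix n r =
      of (fun t k : Fin n => kmsFactor r t k) * (of fun t k : Fin n => kmsFactor r t k)ᵀ := by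
  ext s t
  simp [kmsMatrix, mul_apply, kmsFactor.sum_range_mul hr s.isLt t.isLt,
    Fin.sum_univ_eq_sum_range (fun k => kmsFactor r s k * kmsFactor r t k)]

theorem posSemidef_kmsMatrix {r : ℝ} (hr : r ^ 2 ≤ 1) (n : ℕ) : (kmsMatrix n r).PosSemidef := by
  rw [kmsMatrix_eq_mul_transpose hr]
  exact posSemidef_self_mul_conjTranspose _

theorem kmsMatrix_submatrix_blockIdx {m N : ℕ} (r : ℝ) (i : Fin m) :
    (kmsMatrix (m * N) r).submatrix (blockIdx i) (blockIdx i) = kmsMatrix N r := by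
  ext a b
  simp [kmsMatrix, blockIdx, Nat.dist_add_add_left]

theorem abs_kmsMatrix_apply_sub_one_le {r : ℝ} (hr0 : 0 ≤ r) (hr1 : r ≤ 1) {n : ℕ}
    (a b : Fin n) : |kmsMatrix n r a b - 1| ≤ n * (1 - r ^ 2) := by
  have hd : Nat.dist a b ≤ n := by
    unfold Nat.dist; omega
  have hle : kmsMatrix n r a b ≤ 1 := pow_le_one₀ hr0 hr1
  have hge : 1 - n * (1 - r ^ 2) ≤ kmsMatrix n r a b :=
    calc 1 - n * (1 - r ^ 2) ≤ 1 - Nat.dist a b * (1 - r ^ 2) := by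
          gcongr; nlinarith
      _ ≤ (r ^ 2) ^ Nat.dist a b := by
          have := one_add_mul_le_pow (a := r ^ 2 - 1) (by nlinarith) (Nat.dist a b)
          rw [add_sub_cancel] at this
          linarith
      _ ≤ kmsMatrix n r a b := by
          rw [← pow_mul]; exact pow_le_pow_of_le_one hr0 hr1 (by omega)
  rw [abs_le]; constructor <;> linarith

theorem abs_hadamard_kmsMatrix_apply_sub_le {r : ℝ} (hr0 : 0 ≤ r) (hr1 : r ≤ 1) {n : ℕ}
    {A : Matrix (Fin n) (Fin n) ℝ} (hA : ∀ a b, |A a b| ≤ 1) (a b : Fin n) :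
    |(A ⊙ kmsMatrix n r) a b - A a b| ≤ n * (1 - r ^ 2) := by
  rw [hadamard_apply, ← mul_sub_one, abs_mul]
  exact (mul_le_of_le_one_left (abs_nonneg _) (hA a b)).trans
    (abs_kmsMatrix_apply_sub_one_le hr0 hr1 a b)

theorem rpow_abs_sub_div_two_eq_sqrt_pow_dist {q : ℝ} (hq : 0 ≤ q) (s t : ℕ) :
    q ^ (|(s : ℝ) - t| / 2) = √q ^ Nat.dist s t := by
  have hdist : |(s : ℝ) - t| = Nat.dist s t := by
    rcases le_total s t with h | h
    · rw [Nat.dist_eq_sub_of_le h, Nat.cast_sub h, abs_sub_comm, abs_of_nonneg (by simpa)]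
    · rw [Nat.dist_eq_sub_of_le_right h, Nat.cast_sub h, abs_of_nonneg (by simpa)]
  rw [hdist, Real.sqrt_eq_rpow, ← Real.rpow_natCast, ← Real.rpow_mul hq]
  ring_nf

theorem log_det_hadamard_discount_le_sum_blocks_general
    (N m : ℕ)
    (ε : ℝ) (hε0 : 0 ≤ ε) (hε1 : ε ≤ 1) (σ : ℝ)
    (K : Matrix (Fin (m * N)) (Fin (m * N)) ℝ)
    (h_symm : K.IsSymm) (h_psd : ∀ x : Fin (m * N) → ℝ, 0 ≤ x ⬝ᵥ K.mulVec x)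
    (h_entries : ∀ i j, K i j ∈ Set.Icc (0 : ℝ) 1)
    (D : Matrix (Fin (m * N)) (Fin (m * N)) ℝ)
    (hD : ∀ i j, D i j = (1 - ε) ^ ((|(i : ℝ) - (j : ℝ)|) / 2)) :
    Real.log (1 + (σ ^ 2)⁻¹ • (Matrix.of fun i j => K i j * D i j)).det ≤
      (∑ i : Fin m,
        Real.log (1 + (σ ^ 2)⁻¹ •
          (Matrix.of fun a b : Fin N => K (blockIdx i a) (blockIdx i b))).det)
        + m * (σ ^ 2)⁻¹ * N ^ 3 * ε := by
  set c := (σ ^ 2)⁻¹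
  set r := √(1 - ε)
  have hr2 : r ^ 2 = 1 - ε := Real.sq_sqrt (by linarith)
  have hr1 : r ≤ 1 := Real.sqrt_le_one.mpr (by linarith)
  have hD' : D = kmsMatrix (m * N) r := by
    ext s t
    rw [hD, rpow_abs_sub_div_two_eq_sqrt_pow_dist (by linarith)]
    rfl
  have hK : K.PosSemidef :=
    .of_dotProduct_mulVec_nonneg (isHermitian_iff_isSymm.mpr h_symm) (by simpa using h_psd)
  have hkms (n : ℕ) : (kmsMatrix n r).PosSemidef := posSemidef_kmsMatrix (by linarith) n
  have hK_le_one (a b) : |K a b| ≤ 1 :=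
    abs_le.mpr ⟨by linarith [(h_entries a b).1], (h_entries a b).2⟩
  calc Real.log (1 + c • K ⊙ D).det
      ≤ ∑ i, Real.log (1 + (c • K ⊙ D).submatrix (blockIdx i) (blockIdx i)).det :=
        ((hK.hadamard (hD' ▸ hkms _)).smul (by positivity)).log_det_one_add_le_sum_blocks
    _ = ∑ i, Real.log (1 + c • (K.submatrix (blockIdx i) (blockIdx i) ⊙ kmsMatrix N r)).det := by
        simp only [submatrix_smul, Pi.smul_apply, submatrix_hadamard, hD',
          kmsMatrix_submatrix_blockIdx]
    _ ≤ ∑ i, (Real.log (1 + c • K.submatrix (blockIdx i) (blockIdx i)).det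
          + c * N ^ 2 * (N * (1 - r ^ 2))) :=
        Finset.sum_le_sum fun i _ => by
          simpa using ((hK.submatrix _).hadamard (hkms N)).log_det_one_add_smul_le_of_abs_sub_le
            (hK.submatrix _) (by positivity) (by nlinarith)
            (abs_hadamard_kmsMatrix_apply_sub_le (Real.sqrt_nonneg _) hr1 fun a b => hK_le_one _ _)
    _ = _ := by
        rw [Finset.sum_add_distrib, Finset.sum_const, Finset.card_univ, Fintype.card_fin,
          nsmul_eq_mul, hr2, sub_sub_cancel]
        congr 1
        ring

/-- Key mutual-information bound for TV-GP-UCB in matrix form: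
`log det(I_T + σ⁻²(K ∘ D_T)) ≤ ∑ᵢ log det(I_N + σ⁻²K⁽ⁱ⁾) + m·σ⁻²·N³·ε`,
where `D_T` has entries `(1-ε)^(|i-j|/2)`, `T = mN`, and `K⁽ⁱ⁾` are the diagonal blocks. -/
theorem log_det_hadamard_discount_le_sum_blocks
    (N m : ℕ) (hN : 1 ≤ N) (hm : 1 ≤ m)
    (ε : ℝ) (hε0 : 0 ≤ ε) (hε1 : ε ≤ 1) (σ : ℝ) (hσ : 0 < σ)
    (K : Matrix (Fin (m * N)) (Fin (m * N)) ℝ)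
    (h_symm : K.IsSymm) (h_psd : ∀ x : Fin (m * N) → ℝ, 0 ≤ x ⬝ᵥ K.mulVec x)
    (h_entries : ∀ i j, K i j ∈ Set.Icc (0 : ℝ) 1)
    (D : Matrix (Fin (m * N)) (Fin (m * N)) ℝ)
    (hD : ∀ i j, D i j = (1 - ε) ^ ((|(i : ℝ) - (j : ℝ)|) / 2)) :
    Real.log (1 + (σ ^ 2)⁻¹ • (Matrix.of fun i j => K i j * D i j)).det ≤
      (∑ i : Fin m,
        Real.log (1 + (σ ^ 2)⁻¹ •
          (Matrix.of fun a b : Fin N => K (blockIdx i a) (blockIdx i b))).det)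
        + m * (σ ^ 2)⁻¹ * N ^ 3 * ε :=
  log_det_hadamard_discount_le_sum_blocks_general N m ε hε0 hε1 σ K h_symm h_psd h_entries D hD
end

section
/- Let N ≥ 1 be an integer and ε ∈ [0,1]. Let k ∈ ℝ^N have all entries in [0,1], and let d ∈ ℝ^N be the vector with entries d_i = (1−ε)^{(N+1−i)/2}. Then ∑_{i=1}^N (k_i·d_i − k_i)² ≤ N³ε². -/
/-!
Each discount factor `dᵢ = (1 - ε)^{eᵢ}` has exponent `eᵢ ∈ [0, N]`, so Bernoulli's inequality gives
`1 - Nε ≤ (1 - ε)^N ≤ dᵢ ≤ 1`. Since `kᵢ ∈ [0, 1]`, each term `(kᵢdᵢ - kᵢ)² = kᵢ²(1 - dᵢ)²` is at most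
`(Nε)²`, and there are `N` terms.
-/

open Finset

theorem one_sub_nat_mul_le_rpow_one_sub {ε e : ℝ} {n : ℕ} (hε0 : 0 ≤ ε) (hε1 : ε ≤ 1)
    (he0 : 0 ≤ e) (hen : e ≤ n) : 1 - n * ε ≤ (1 - ε) ^ e :=
  calc 1 - n * ε = 1 + n * (-ε) := by ring
    _ ≤ (1 + -ε) ^ n := one_add_mul_le_pow (by linarith) n
    _ = (1 - ε) ^ (n : ℝ) := by rw [Real.rpow_natCast, ← sub_eq_add_neg]
    _ ≤ (1 - ε) ^ e :=
      Real.rpow_le_rpow_of_exponent_ge' (by linarith) (by linarith) he0 hen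

theorem sq_mul_sub_self_le_sq {k d δ : ℝ} (hk : k ∈ Set.Icc (0 : ℝ) 1) (hd : d ∈ Set.Icc (1 - δ) 1) :
    (k * d - k) ^ 2 ≤ δ ^ 2 := by
  obtain ⟨hk0, hk1⟩ := hk
  obtain ⟨hdδ, hd1⟩ := hd
  have hgap : 0 ≤ 1 - d := by linarith
  calc (k * d - k) ^ 2 = k ^ 2 * (1 - d) ^ 2 := by ring
    _ ≤ 1 * (1 - d) ^ 2 := by gcongr; exact pow_le_one₀ hk0 hk1
    _ ≤ δ ^ 2 := by rw [one_mul]; gcongr; linarith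

theorem discounted_kernel_vector_dev_le_general
    (N : ℕ) (ε : ℝ) (hε0 : 0 ≤ ε) (hε1 : ε ≤ 1)
    (k : Fin N → ℝ) (hk : ∀ i, k i ∈ Set.Icc (0 : ℝ) 1)
    (d : Fin N → ℝ)
    (hd : ∀ i : Fin N, d i = (1 - ε) ^ (((N : ℝ) + 1 - ((i : ℕ) + 1)) / 2)) :
    ∑ i, (k i * d i - k i) ^ 2 ≤ N ^ 3 * ε ^ 2 := by
  have hd_mem (i : Fin N) : d i ∈ Set.Icc (1 - N * ε) 1 := by
    have hiN : ((i : ℕ) : ℝ) + 1 ≤ N := by exact_mod_cast i.2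
    have hi0 : (0 : ℝ) ≤ (i : ℕ) := Nat.cast_nonneg _
    have he0 : 0 ≤ ((N : ℝ) + 1 - ((i : ℕ) + 1)) / 2 := by linarith
    rw [hd i]
    exact ⟨one_sub_nat_mul_le_rpow_one_sub hε0 hε1 he0 (by linarith),
      Real.rpow_le_one (by linarith) (by linarith) he0⟩
  calc ∑ i, (k i * d i - k i) ^ 2 ≤ ∑ _i : Fin N, ((N : ℝ) * ε) ^ 2 :=
        sum_le_sum fun i _ ↦ sq_mul_sub_self_le_sq (hk i) (hd_mem i)
    _ = N ^ 3 * ε ^ 2 := by simp only [sum_const, card_univ, Fintype.card_fin, nsmul_eq_mul]; ring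

/-- Bound on `‖k ∘ d - k‖₂²` where `d_i = (1-ε)^((N+1-i)/2)` is the temporal discount
vector and the entries of `k` lie in `[0,1]`: `∑ᵢ (kᵢdᵢ - kᵢ)² ≤ N³ε²`. -/
theorem discounted_kernel_vector_dev_le
    (N : ℕ) (hN : 1 ≤ N) (ε : ℝ) (hε0 : 0 ≤ ε) (hε1 : ε ≤ 1)
    (k : Fin N → ℝ) (hk : ∀ i, k i ∈ Set.Icc (0 : ℝ) 1)
    (d : Fin N → ℝ)
    (hd : ∀ i : Fin N, d i = (1 - ε) ^ (((N : ℝ) + 1 - ((i : ℕ) + 1)) / 2)) :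
    ∑ i, (k i * d i - k i) ^ 2 ≤ N ^ 3 * ε ^ 2 :=
  discounted_kernel_vector_dev_le_general N ε hε0 hε1 k hk d hd
end

section
/- Let D ⊆ ℝ^d be a convex set, let f, g : ℝ^d → ℝ be twice continuously differentiable, and let M > 0 be such that the operator norm of the Hessian of f and of the Hessian of g is at most M at every point of D. Let ε ∈ (0,1], and define h = √(1−ε)·f + √ε·g. Suppose x ∈ D satisfies ∇f(x) = 0 and ∇g(x) ≠ 0, set v = ∇g(x)/‖∇g(x)‖₂ and δ = √ε·‖∇g(x)‖₂/(2M), and suppose x + δv ∈ D. Then h(x + δv) − h(x) ≥ ε·‖∇g(x)‖₂²/(4M). -/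
/-!
If the derivative of `φ` is `M`-Lipschitz on a convex set, the auxiliary function
`t ↦ φ (x + t • u) - t φ'(x) u + (M / 2) ‖u‖² t²` is monotone on `[0, 1]`, which gives the
quadratic lower bound `φ (x + u) ≥ φ x + φ'(x) u - (M / 2) ‖u‖²`; a Hessian bound yields the
Lipschitz bound by the mean value inequality. For the step `u = δ • v` the linear term vanishes
for `f` and equals `δ ‖∇g(x)‖` for `g`. As `√(1 - ε), √ε ≤ 1`, the gain of `h` is at least
`√ε δ ‖∇g(x)‖ - M δ²`, and `δ` is chosen to make this `ε ‖∇g(x)‖² / (4M)`.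
-/

open Set

section QuadraticLowerBound

variable {E : Type*} [NormedAddCommGroup E] [NormedSpace ℝ E] {φ : E → ℝ} {D : Set E} {M : ℝ}
  {x u : E}

theorem Convex.image_add_ge_of_norm_fderiv_sub_le (hD : Convex ℝ D) (hφ : Differentiable ℝ φ)
    (hφ' : ∀ y ∈ D, ‖fderiv ℝ φ y - fderiv ℝ φ x‖ ≤ M * ‖y - x‖) (hx : x ∈ D) (hxu : x + u ∈ D) :
    φ x + fderiv ℝ φ x u - M / 2 * ‖u‖ ^ 2 ≤ φ (x + u) := by
  set ψ : ℝ → ℝ := fun t ↦ φ (x + t • u) - t * fderiv ℝ φ x u + M / 2 * ‖u‖ ^ 2 * t ^ 2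
  have hψ : ∀ t, HasDerivAt ψ (fderiv ℝ φ (x + t • u) u - fderiv ℝ φ x u + M * ‖u‖ ^ 2 * t) t := by
    intro t
    have hline : HasDerivAt (fun t : ℝ ↦ x + t • u) u t := by
      simpa using ((hasDerivAt_id t).smul_const u).const_add x
    have hcomp := (hφ _).hasFDerivAt.comp_hasDerivAt t hline
    have hlin := hasDerivAt_mul_const (fderiv ℝ φ x u) (x := t)
    have hquad := (hasDerivAt_pow 2 t).const_mul (M / 2 * ‖u‖ ^ 2)
    exact ((hcomp.sub hlin).add hquad).congr_deriv (by push_cast; ring)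
  have hψ_mono : MonotoneOn ψ (Icc 0 1) := by
    refine monotoneOn_of_deriv_nonneg (convex_Icc 0 1)
      (fun t _ ↦ (hψ t).continuousAt.continuousWithinAt)
      (fun t _ ↦ (hψ t).differentiableAt.differentiableWithinAt) fun t ht ↦ ?_
    rw [interior_Icc] at ht
    have hxt : x + t • u ∈ D := by
      simpa using hD.add_smul_mem hx hxu (Ioo_subset_Icc_self ht)
    have hLip : |fderiv ℝ φ (x + t • u) u - fderiv ℝ φ x u| ≤ M * t * ‖u‖ ^ 2 :=
      calc |fderiv ℝ φ (x + t • u) u - fderiv ℝ φ x u|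
          ≤ M * ‖t • u‖ * ‖u‖ := by
            simpa using ((fderiv ℝ φ (x + t • u) - fderiv ℝ φ x).le_opNorm u).trans
              (mul_le_mul_of_nonneg_right (hφ' _ hxt) (norm_nonneg u))
        _ = M * t * ‖u‖ ^ 2 := by rw [norm_smul, Real.norm_of_nonneg ht.1.le]; ring
    rw [(hψ t).deriv]
    linarith [neg_le_of_abs_le hLip]
  have := hψ_mono (left_mem_Icc.2 zero_le_one) (right_mem_Icc.2 zero_le_one) zero_le_one
  simp only [ψ, zero_smul, add_zero, zero_mul, sub_zero, one_smul, one_mul, one_pow] at this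
  linarith

theorem Convex.image_add_ge_of_norm_fderiv_fderiv_le (hD : Convex ℝ D) (hφ : ContDiff ℝ 2 φ)
    (hφ'' : ∀ y ∈ D, ‖fderiv ℝ (fderiv ℝ φ) y‖ ≤ M) (hx : x ∈ D) (hxu : x + u ∈ D) :
    φ x + fderiv ℝ φ x u - M / 2 * ‖u‖ ^ 2 ≤ φ (x + u) := by
  have hφ' : Differentiable ℝ (fderiv ℝ φ) :=
    (hφ.fderiv_right (m := 1) one_add_one_eq_two.le).differentiable one_ne_zero
  exact hD.image_add_ge_of_norm_fderiv_sub_le (hφ.differentiable two_ne_zero)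
    (fun y hy ↦ hD.norm_image_sub_le_of_norm_fderiv_le (fun z _ ↦ hφ' z) hφ'' hx hy) hx hxu

end QuadraticLowerBound

/-- Second-order Taylor estimate at the core of the regret lower bound: with
`h = √(1-ε)f + √ε·g`, `∇f(x) = 0`, Hessians bounded by `M` on the convex set `D`, and the
step `δ = √ε‖∇g(x)‖/(2M)` in the direction `v = ∇g(x)/‖∇g(x)‖`, we have
`h(x + δv) - h(x) ≥ ε‖∇g(x)‖²/(4M)`. -/
theorem taylor_step_gain
    (d : ℕ) (D : Set (EuclideanSpace ℝ (Fin d))) (hD : Convex ℝ D)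
    (f g : EuclideanSpace ℝ (Fin d) → ℝ)
    (hf : ContDiff ℝ 2 f) (hg : ContDiff ℝ 2 g)
    (M : ℝ) (hM : 0 < M)
    (hfM : ∀ y ∈ D, ‖fderiv ℝ (fderiv ℝ f) y‖ ≤ M)
    (hgM : ∀ y ∈ D, ‖fderiv ℝ (fderiv ℝ g) y‖ ≤ M)
    (ε : ℝ) (hε0 : 0 < ε) (hε1 : ε ≤ 1)
    (h : EuclideanSpace ℝ (Fin d) → ℝ)
    (hh : ∀ y, h y = Real.sqrt (1 - ε) * f y + Real.sqrt ε * g y)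
    (x : EuclideanSpace ℝ (Fin d)) (hx : x ∈ D)
    (hfx : gradient f x = 0) (hgx : gradient g x ≠ 0)
    (v : EuclideanSpace ℝ (Fin d)) (hv : v = ‖gradient g x‖⁻¹ • gradient g x)
    (δ : ℝ) (hδ : δ = Real.sqrt ε * ‖gradient g x‖ / (2 * M))
    (hxδ : x + δ • v ∈ D) :
    h (x + δ • v) - h x ≥ ε * ‖gradient g x‖ ^ 2 / (4 * M) := by
  have hG : 0 < ‖gradient g x‖ := norm_pos_iff.2 hgx
  have hδ0 : 0 ≤ δ := hδ ▸ by positivity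
  have hstep : ‖δ • v‖ = δ := by
    rw [hv, norm_smul, norm_smul, norm_inv, norm_norm, inv_mul_cancel₀ hG.ne',
      Real.norm_of_nonneg hδ0, mul_one]
  have hf_step : fderiv ℝ f x (δ • v) = 0 := by
    rw [← inner_gradient_left, hfx, inner_zero_left]
  have hg_step : fderiv ℝ g x (δ • v) = δ * ‖gradient g x‖ := by
    rw [← inner_gradient_left, hv, real_inner_smul_right, real_inner_smul_right,
      real_inner_self_eq_norm_sq]
    field_simp
  have hf_gain := hD.image_add_ge_of_norm_fderiv_fderiv_le hf hfM hx hxδ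
  have hg_gain := hD.image_add_ge_of_norm_fderiv_fderiv_le hg hgM hx hxδ
  rw [hf_step, hstep] at hf_gain
  rw [hg_step, hstep] at hg_gain
  have hδ_gain : √ε * (δ * ‖gradient g x‖) - M * δ ^ 2 = ε * ‖gradient g x‖ ^ 2 / (4 * M) := by
    rw [hδ]
    field_simp
    rw [Real.sq_sqrt hε0.le]
    ring
  have hs1 : √(1 - ε) ≤ 1 := Real.sqrt_le_one.2 (by linarith)
  have hs2 : √ε ≤ 1 := Real.sqrt_le_one.2 hε1
  rw [hh, hh]
  have hquad : 0 ≤ M / 2 * δ ^ 2 := by positivity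
  linarith [mul_nonneg (Real.sqrt_nonneg (1 - ε)) (sub_nonneg.2 hf_gain),
    mul_nonneg (Real.sqrt_nonneg ε) (sub_nonneg.2 hg_gain),
    mul_nonneg (sub_nonneg.2 hs1) hquad, mul_nonneg (sub_nonneg.2 hs2) hquad]
end
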